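/- arXiv:1304.2549 — 7 statements merged into one kernel-verified Lean document; each statement's English description precedes it below -/
import Mathlib

section
/- Let k be a field and let F ∈ k[x] ⊂ k[x,y] be a squarefree nonconstant polynomial in the variable x alone. Then a k-algebra automorphism φ of k[x,y] satisfies φ(F) = cF for some c ∈ k* if and only if there exist a, c' ∈ k*, b ∈ k and P ∈ k[x] such that φ(x) = ax + b, φ(y) = c'y + P(x), and F(ax + b) = λ·F(x) for some λ ∈ k*. -/
/-!
Transport `φ` to an automorphism `Φ` of `k[x][y]`. Since `f(Φ x) = Φ (f x) = c f` has `y`-degree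
`0` while `deg f > 0`, the image `Φ x = p(x)` is free of `y`, and comparing `x`-degrees in
`f ∘ p = c f` forces `p` to be affine. So `Φ` acts on the coefficient ring `k[x]` as substitution
of `p`, whence `y = Φ (Φ⁻¹ y)` is a polynomial in `Φ y` with coefficients in `k[x]`. Hence `Φ y`
has `y`-degree `1` and its leading coefficient is a unit of `k[x]`, i.e. a nonzero constant.
-/

open MvPolynomial

namespace Polynomial

theorem ringHom_apply_eq_map_comp {R S : Type*} [CommSemiring R] [CommSemiring S]
    (Φ : R[X] →+* S[X]) (σ : R →+* S) (h : ∀ r, Φ (C r) = C (σ r)) (w : R[X]) :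
    Φ w = (w.map σ).comp (Φ X) := by
  have : Φ = eval₂RingHom (C.comp σ) (Φ X) := ringHom_ext (by simpa using h) (by simp)
  rw [this, comp, eval₂_map]
  simp

theorem aeval_C_eq_C_comp {R : Type*} [CommSemiring R] (p r : R[X]) :
    aeval (C p : R[X][X]) r = C (r.comp p) := by
  rw [comp_eq_aeval]
  exact aeval_algHom_apply (CAlgHom : R[X] →ₐ[R] R[X][X]) p r

section Domain

variable {R : Type*} [CommRing R] [IsDomain R]

theorem natDegree_aeval {k : Type*} [CommSemiring k] [Algebra k R] [FaithfulSMul k R]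
    (f : k[X]) (u : R[X]) : (aeval u f).natDegree = f.natDegree * u.natDegree := by
  rw [← aeval_map_algebraMap R u f, ← comp_eq_aeval, natDegree_comp,
    natDegree_map_eq_of_injective (FaithfulSMul.algebraMap_injective k R)]

theorem natDegree_eq_one_of_comp_eq_C_mul {f p : R[X]} {c : R} (hf : 0 < f.natDegree)
    (hc : c ≠ 0) (h : f.comp p = C c * f) : p.natDegree = 1 := by
  have := congrArg natDegree h
  rw [natDegree_comp, natDegree_C_mul hc] at this
  exact Nat.eq_of_mul_eq_mul_left hf (this.trans (mul_one _).symm)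

theorem exists_isUnit_eq_C_mul_X_add_C_of_comp_eq_X {p q : R[X]} (h : p.comp q = X) :
    ∃ a b, IsUnit a ∧ q = C a * X + C b := by
  have hdeg : p.natDegree * q.natDegree = 1 := by rw [← natDegree_comp, h, natDegree_X]
  have hq : q.natDegree = 1 := Nat.eq_one_of_mul_eq_one_left hdeg
  have hlc : p.leadingCoeff * q.leadingCoeff ^ p.natDegree = 1 := by
    rw [← leadingCoeff_comp (by omega), h, leadingCoeff_X]
  rw [Nat.eq_one_of_mul_eq_one_right hdeg, pow_one] at hlc
  refine ⟨q.leadingCoeff, q.coeff 0, IsUnit.of_mul_eq_one_right _ hlc, ?_⟩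
  rw [leadingCoeff, hq]
  exact eq_X_add_C_of_natDegree_le_one hq.le

theorem exists_isUnit_apply_X_eq_C_mul_X_add_C (Φ : R[X] ≃+* R[X]) (σ : R →+* R)
    (h : ∀ r, Φ (C r) = C (σ r)) :
    ∃ a b, IsUnit a ∧ Φ X = C a * X + C b := by
  refine exists_isUnit_eq_C_mul_X_add_C_of_comp_eq_X (p := (Φ.symm X).map σ) ?_
  exact (ringHom_apply_eq_map_comp (Φ : R[X] →+* R[X]) σ h _).symm.trans (Φ.apply_symm_apply X)

end Domain

theorem exists_affine_of_algEquiv_apply_C_eq {k : Type*} [Field k] {f : k[X]}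
    (hf : 0 < f.natDegree) (Φ : k[X][X] ≃ₐ[k] k[X][X]) (c : kˣ)
    (h : Φ (C f) = C (C (c : k) * f)) :
    ∃ (a c' : kˣ) (b : k) (P : k[X]), Φ (C X) = C (C (a : k) * X + C b) ∧
      Φ X = C (C (c' : k)) * X + C P ∧ f.comp (C (a : k) * X + C b) = C (c : k) * f := by
  have hΦC : ∀ r : k[X], Φ (C r) = aeval (Φ (C X)) r := fun r => by
    rw [aeval_algHom_apply, aeval_C_eq_C_comp, comp_X]
  obtain ⟨p, hp⟩ : ∃ p, Φ (C X) = C p := by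
    refine ⟨_, eq_C_of_natDegree_eq_zero ((mul_eq_zero.mp ?_).resolve_left hf.ne')⟩
    rw [← natDegree_aeval, ← hΦC, h, natDegree_C]
  have hσ : ∀ r, Φ (C r) = C (compRingHom p r) := fun r => by
    rw [hΦC, hp, aeval_C_eq_C_comp, coe_compRingHom_apply]
  have hcomp : f.comp p = C (c : k) * f :=
    C_injective (by rw [← coe_compRingHom_apply, ← hσ, h])
  have hdeg := natDegree_eq_one_of_comp_eq_C_mul hf c.ne_zero hcomp
  obtain ⟨a, b, rfl⟩ := exists_eq_X_add_C_of_natDegree_le_one hdeg.le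
  have ha : a ≠ 0 := by
    rintro rfl
    simp at hdeg
  obtain ⟨_, P, hunit, hX⟩ := exists_isUnit_apply_X_eq_C_mul_X_add_C Φ.toRingEquiv _ hσ
  obtain ⟨c', hc', rfl⟩ := isUnit_iff.mp hunit
  exact ⟨Units.mk0 a ha, hc'.unit, b, P, hp, hX, hcomp⟩

end Polynomial

namespace MvPolynomial

variable (k : Type*) [CommRing k]

noncomputable def finTwoEquiv : MvPolynomial (Fin 2) k ≃ₐ[k] Polynomial (Polynomial k) :=
  (renameEquiv k (Equiv.swap 0 1)).trans <|
    (finSuccEquiv k 1).trans <|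
      Polynomial.mapAlgEquiv ((finSuccEquiv k 0).trans
        (Polynomial.mapAlgEquiv (isEmptyAlgEquiv k (Fin 0))))

variable {k}

@[simp]
theorem finTwoEquiv_X_zero : finTwoEquiv k (X 0) = Polynomial.C Polynomial.X := by
  rw [finTwoEquiv, AlgEquiv.trans_apply, renameEquiv_apply, rename_X,
    show Equiv.swap (0 : Fin 2) 1 0 = Fin.succ 0 from rfl, AlgEquiv.trans_apply,
    finSuccEquiv_X_succ]
  simp [finSuccEquiv_X_zero]

@[simp]
theorem finTwoEquiv_X_one : finTwoEquiv k (X 1) = Polynomial.X := by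
  rw [finTwoEquiv, AlgEquiv.trans_apply, renameEquiv_apply, rename_X,
    show Equiv.swap (0 : Fin 2) 1 1 = 0 from rfl, AlgEquiv.trans_apply, finSuccEquiv_X_zero]
  simp

@[simp]
theorem finTwoEquiv_C (r : k) : finTwoEquiv k (C r) = Polynomial.C (Polynomial.C r) :=
  (finTwoEquiv k).commutes r

@[simp]
theorem finTwoEquiv_aeval_X_zero (f : Polynomial k) :
    finTwoEquiv k (Polynomial.aeval (X 0) f) = Polynomial.C f := by
  rw [← Polynomial.aeval_algHom_apply, finTwoEquiv_X_zero, Polynomial.aeval_C_eq_C_comp,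
    Polynomial.comp_X]

end MvPolynomial

theorem aut_of_fence_general {k : Type*} [Field k] (f : Polynomial k)
    (hnc : 0 < f.natDegree)
    (φ : MvPolynomial (Fin 2) k ≃ₐ[k] MvPolynomial (Fin 2) k) :
    (∃ c : kˣ, φ (Polynomial.aeval (X 0) f) = C (c : k) * Polynomial.aeval (X 0) f) ↔
      (∃ (a c' : kˣ) (b : k) (P : Polynomial k),
        φ (X 0) = C (a : k) * X 0 + C b ∧
        φ (X 1) = C (c' : k) * X 1 + Polynomial.aeval (X 0) P ∧
        ∃ lam : kˣ, f.comp (Polynomial.C (a : k) * Polynomial.X + Polynomial.C b)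
          = Polynomial.C (lam : k) * f) := by
  let ι := finTwoEquiv k
  let Φ := (ι.symm.trans φ).trans ι
  have hΦ : ∀ z, Φ (ι z) = ι (φ z) := fun z => by simp [Φ]
  constructor
  · rintro ⟨c, hc⟩
    have hf : Φ (Polynomial.C f) = Polynomial.C (Polynomial.C (c : k) * f) := by
      rw [← finTwoEquiv_aeval_X_zero, hΦ, hc]
      simp [ι, Polynomial.C_mul]
    obtain ⟨a, c', b, P, hx, hy, hcomp⟩ :=
      Polynomial.exists_affine_of_algEquiv_apply_C_eq hnc Φ c hf
    refine ⟨a, c', b, P, ι.injective ?_, ι.injective ?_, c, hcomp⟩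
    · rw [← hΦ, finTwoEquiv_X_zero, hx]
      simp [ι]
    · rw [← hΦ, finTwoEquiv_X_one, hy]
      simp [ι]
  · rintro ⟨a, -, b, -, hx, -, lam, hf⟩
    refine ⟨lam, ?_⟩
    have hx' : φ (X 0) =
        Polynomial.aeval (X 0) (Polynomial.C (a : k) * Polynomial.X + Polynomial.C b) := by
      simp [hx, algebraMap_eq]
    rw [← Polynomial.aeval_algHom_apply, hx', ← Polynomial.aeval_comp, hf]
    simp [algebraMap_eq]

/-- description of the automorphisms of `𝔸²` preserving a fence `F(x) = 0`,
where `F ∈ k[x]` is squarefree and nonconstant. -/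
theorem aut_of_fence {k : Type*} [Field k] (f : Polynomial k)
    (hsf : Squarefree f) (hnc : 0 < f.natDegree)
    (φ : MvPolynomial (Fin 2) k ≃ₐ[k] MvPolynomial (Fin 2) k) :
    (∃ c : kˣ, φ (Polynomial.aeval (X 0) f) = C (c : k) * Polynomial.aeval (X 0) f) ↔
      (∃ (a c' : kˣ) (b : k) (P : Polynomial k),
        φ (X 0) = C (a : k) * X 0 + C b ∧
        φ (X 1) = C (c' : k) * X 1 + Polynomial.aeval (X 0) P ∧
        ∃ lam : kˣ, f.comp (Polynomial.C (a : k) * Polynomial.X + Polynomial.C b)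
          = Polynomial.C (lam : k) * f) :=
  aut_of_fence_general f hnc φ
end

section
/- Let G be a group acting on a set S, let r ≥ 1 and let Δ ⊆ S be a finite subset with exactly r elements. Suppose that the action of G on S is 2r-transitive and that |S| > 2r. Then the setwise stabilizer G_Δ = {g ∈ G : g(Δ) = Δ} is a maximal proper subgroup of G. -/
open Pointwise

section AuxStab

variable {G S : Type*} [Group G] [MulAction G S]

private lemma auxStab_snoc_inj {n : ℕ} {s : Fin n → S} (hs : Function.Injective s) {x : S}
    (hx : ∀ i, s i ≠ x) : Function.Injective (Fin.snoc s x) := by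
  intro a b hab
  induction a using Fin.lastCases with
  | last =>
    induction b using Fin.lastCases with
    | last => rfl
    | cast b =>
      rw [Fin.snoc_last, Fin.snoc_castSucc] at hab
      exact absurd hab.symm (hx b)
  | cast a =>
    induction b using Fin.lastCases with
    | last =>
      rw [Fin.snoc_last, Fin.snoc_castSucc] at hab
      exact absurd hab (hx a)
    | cast b =>
      rw [Fin.snoc_castSucc, Fin.snoc_castSucc] at hab
      exact congrArg Fin.castSucc (hs hab)

private lemma auxStab_extend {N : ℕ} (hS : ∀ A : Finset S, A.card ≤ N → ∃ x, x ∉ A) :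
    ∀ d m, ∀ _hm : m + d = N, ∀ s : Fin m → S, Function.Injective s →
      ∃ s' : Fin N → S, Function.Injective s' ∧
        ∀ i : Fin m, s' (Fin.castLE (by omega) i) = s i := by
  intro d
  induction d with
  | zero =>
    intro m hm s hs
    have hm' : m = N := by omega
    subst hm'
    exact ⟨s, hs, fun i => congrArg s (Fin.ext rfl)⟩
  | succ d ih =>
    intro m hm s hs
    classical
    obtain ⟨x, hx⟩ := hS (Finset.univ.image s)
      (le_trans Finset.card_image_le
        (by simp only [Finset.card_univ, Fintype.card_fin]; omega))
    have hx' : ∀ i, s i ≠ x := fun i h =>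
      hx (h ▸ Finset.mem_image_of_mem s (Finset.mem_univ i))
    obtain ⟨s', h1, h2⟩ := ih (m + 1) (by omega) (Fin.snoc s x) (auxStab_snoc_inj hs hx')
    refine ⟨s', h1, fun i => ?_⟩
    have h3 := h2 (Fin.castSucc i)
    rw [Fin.snoc_castSucc] at h3
    rw [← h3]
    exact congrArg s' (Fin.ext rfl)

private lemma auxStab_trans {N : ℕ}
    (htrans : ∀ s t : Fin N → S, Function.Injective s → Function.Injective t →
      ∃ g : G, ∀ i, g • s i = t i)
    (hS : ∀ A : Finset S, A.card ≤ N → ∃ x, x ∉ A)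
    (m : ℕ) (hm : m ≤ N) (s t : Fin m → S)
    (hs : Function.Injective s) (ht : Function.Injective t) :
    ∃ g : G, ∀ i, g • s i = t i := by
  obtain ⟨s', hs', hse⟩ := auxStab_extend hS (N - m) m (by omega) s hs
  obtain ⟨t', ht', hte⟩ := auxStab_extend hS (N - m) m (by omega) t ht
  obtain ⟨g, hg⟩ := htrans s' t' hs' ht'
  exact ⟨g, fun i => by rw [← hse i, ← hte i]; exact hg _⟩

private lemma auxStab_trans_finset {N : ℕ}
    (htrans : ∀ s t : Fin N → S, Function.Injective s → Function.Injective t →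
      ∃ g : G, ∀ i, g • s i = t i)
    (hS : ∀ A : Finset S, A.card ≤ N → ∃ x, x ∉ A)
    (A : Finset S) (hA : A.card ≤ N) (f : S → S) (hf : Set.InjOn f A) :
    ∃ g : G, ∀ a ∈ A, g • a = f a := by
  classical
  let e := A.equivFin
  let s : Fin A.card → S := fun i => ((e.symm i : A) : S)
  have hsmem : ∀ i, s i ∈ A := fun i => (e.symm i).2
  have hs : Function.Injective s := fun i j h =>
    e.symm.injective (Subtype.ext h)
  have ht : Function.Injective (f ∘ s) := fun i j h =>
    hs (hf (hsmem i) (hsmem j) h)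
  obtain ⟨g, hg⟩ := auxStab_trans htrans hS A.card hA s (f ∘ s) hs ht
  refine ⟨g, fun a ha => ?_⟩
  have : s (e ⟨a, ha⟩) = a := by simp [s]
  calc g • a = g • s (e ⟨a, ha⟩) := by rw [this]
    _ = (f ∘ s) (e ⟨a, ha⟩) := hg _
    _ = f a := by rw [Function.comp_apply, this]

private lemma auxStab_smul_eq [DecidableEq S] {g : G} {A B : Finset S}
    (h : ∀ a ∈ A, g • a ∈ B) (hc : A.card = B.card) : g • A = B := by
  have hsub : g • A ⊆ B := by
    intro x hx
    rw [Finset.mem_smul_finset] at hx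
    obtain ⟨a, ha, rfl⟩ := hx
    exact h a ha
  exact Finset.eq_of_subset_of_card_le hsub (by rw [Finset.card_smul_finset, hc])

private lemma auxStab_L1 [DecidableEq S] {r : ℕ}
    (H : ∀ (A : Finset S), A.card ≤ 2 * r → ∀ f : S → S, Set.InjOn f A →
      ∃ g : G, ∀ a ∈ A, g • a = f a)
    (Δ : Finset S) (hcard : Δ.card = r)
    (Γ Γ' : Finset S) (hΓ : Γ.card = r) (hΓ' : Γ'.card = r)
    (hk : (Δ ∩ Γ).card = (Δ ∩ Γ').card) :
    ∃ g : G, g • Δ = Δ ∧ g • Γ = Γ' := by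
  have c1 : (Δ \ Γ).card = (Δ \ Γ').card := by
    have h1 := Finset.card_sdiff_add_card_inter Δ Γ
    have h2 := Finset.card_sdiff_add_card_inter Δ Γ'
    omega
  have c2 : (Γ \ Δ).card = (Γ' \ Δ).card := by
    have h1 := Finset.card_sdiff_add_card_inter Γ Δ
    have h2 := Finset.card_sdiff_add_card_inter Γ' Δ
    rw [Finset.inter_comm] at h1 h2
    omega
  let e₁ := Finset.equivOfCardEq hk
  let e₂ := Finset.equivOfCardEq c1
  let e₃ := Finset.equivOfCardEq c2
  let f : S → S := fun x =>
    if h : x ∈ Δ ∩ Γ then (e₁ ⟨x, h⟩ : S)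
    else if h : x ∈ Δ \ Γ then (e₂ ⟨x, h⟩ : S)
    else if h : x ∈ Γ \ Δ then (e₃ ⟨x, h⟩ : S)
    else x
  have f1 : ∀ x (h : x ∈ Δ ∩ Γ), f x = (e₁ ⟨x, h⟩ : S) := fun x h => dif_pos h
  have f2 : ∀ x (h : x ∈ Δ \ Γ), f x = (e₂ ⟨x, h⟩ : S) := by
    intro x h
    have hx : x ∉ Δ ∩ Γ := by
      simp only [Finset.mem_sdiff] at h
      simp only [Finset.mem_inter]
      tauto
    simp only [f, dif_neg hx, dif_pos h]
  have f3 : ∀ x (h : x ∈ Γ \ Δ), f x = (e₃ ⟨x, h⟩ : S) := by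
    intro x h
    have hx1 : x ∉ Δ ∩ Γ := by
      simp only [Finset.mem_sdiff] at h
      simp only [Finset.mem_inter]
      tauto
    have hx2 : x ∉ Δ \ Γ := by
      simp only [Finset.mem_sdiff] at h ⊢
      tauto
    simp only [f, dif_neg hx1, dif_neg hx2, dif_pos h]
  have m1 : ∀ x (h : x ∈ Δ ∩ Γ), f x ∈ Δ ∩ Γ' := by
    intro x h; rw [f1 x h]; exact (e₁ ⟨x, h⟩).2
  have m2 : ∀ x (h : x ∈ Δ \ Γ), f x ∈ Δ \ Γ' := by
    intro x h; rw [f2 x h]; exact (e₂ ⟨x, h⟩).2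
  have m3 : ∀ x (h : x ∈ Γ \ Δ), f x ∈ Γ' \ Δ := by
    intro x h; rw [f3 x h]; exact (e₃ ⟨x, h⟩).2
  have hinj : Set.InjOn f (Δ ∪ Γ : Finset S) := by
    intro a ha b hb hab
    simp only [Finset.coe_union, Set.mem_union, Finset.mem_coe] at ha hb
    have ca : a ∈ Δ ∩ Γ ∨ a ∈ Δ \ Γ ∨ a ∈ Γ \ Δ := by
      simp only [Finset.mem_inter, Finset.mem_sdiff]; tauto
    have cb : b ∈ Δ ∩ Γ ∨ b ∈ Δ \ Γ ∨ b ∈ Γ \ Δ := by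
      simp only [Finset.mem_inter, Finset.mem_sdiff]; tauto
    rcases ca with h | h | h <;> rcases cb with h' | h' | h'
    · rw [f1 a h, f1 b h'] at hab
      exact congrArg Subtype.val (e₁.injective (Subtype.ext hab))
    · exfalso; have A := m1 a h; have B := m2 b h'; rw [hab] at A
      simp only [Finset.mem_inter, Finset.mem_sdiff] at A B; tauto
    · exfalso; have A := m1 a h; have B := m3 b h'; rw [hab] at A
      simp only [Finset.mem_inter, Finset.mem_sdiff] at A B; tauto
    · exfalso; have A := m2 a h; have B := m1 b h'; rw [hab] at A
      simp only [Finset.mem_inter, Finset.mem_sdiff] at A B; tauto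
    · rw [f2 a h, f2 b h'] at hab
      exact congrArg Subtype.val (e₂.injective (Subtype.ext hab))
    · exfalso; have A := m2 a h; have B := m3 b h'; rw [hab] at A
      simp only [Finset.mem_inter, Finset.mem_sdiff] at A B; tauto
    · exfalso; have A := m3 a h; have B := m1 b h'; rw [hab] at A
      simp only [Finset.mem_inter, Finset.mem_sdiff] at A B; tauto
    · exfalso; have A := m3 a h; have B := m2 b h'; rw [hab] at A
      simp only [Finset.mem_inter, Finset.mem_sdiff] at A B; tauto
    · rw [f3 a h, f3 b h'] at hab
      exact congrArg Subtype.val (e₃.injective (Subtype.ext hab))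
  obtain ⟨g, hg⟩ := H (Δ ∪ Γ)
    (le_trans (Finset.card_union_le Δ Γ) (by omega)) f hinj
  refine ⟨g, ?_, ?_⟩
  · apply auxStab_smul_eq _ rfl
    intro a ha
    rw [hg a (Finset.mem_union_left _ ha)]
    by_cases hc : a ∈ Γ
    · exact (Finset.mem_inter.1 (m1 a (Finset.mem_inter.2 ⟨ha, hc⟩))).1
    · exact (Finset.mem_sdiff.1 (m2 a (Finset.mem_sdiff.2 ⟨ha, hc⟩))).1
  · apply auxStab_smul_eq _ (hΓ.trans hΓ'.symm)
    intro a ha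
    rw [hg a (Finset.mem_union_right _ ha)]
    by_cases hc : a ∈ Δ
    · exact (Finset.mem_inter.1 (m1 a (Finset.mem_inter.2 ⟨hc, ha⟩))).2
    · exact (Finset.mem_sdiff.1 (m3 a (Finset.mem_sdiff.2 ⟨ha, hc⟩))).1

end AuxStab

/-- if a group `G` acts `2r`-transitively on a set `S` with more than `2r`
elements, then the setwise stabilizer of any subset `Δ ⊆ S` with `r ≥ 1` elements is a
maximal proper subgroup of `G`. -/
theorem stabilizer_isCoatom {G S : Type*} [Group G] [MulAction G S] (r : ℕ) (hr : 1 ≤ r)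
    (Δ : Finset S) (hcard : Δ.card = r)
    (htrans : ∀ s t : Fin (2 * r) → S, Function.Injective s → Function.Injective t →
      ∃ g : G, ∀ i, g • s i = t i)
    (hbig : ∃ u : Fin (2 * r + 1) → S, Function.Injective u) :
    IsCoatom (MulAction.stabilizer G (Δ : Set S)) := by
  classical
  obtain ⟨u, hu⟩ := hbig
  have hS : ∀ A : Finset S, A.card ≤ 2 * r → ∃ x, x ∉ A := by
    intro A hA
    by_contra hc
    push_neg at hc
    have hsub : Finset.univ.image u ⊆ A := fun x _ => hc x
    have h1 : (Finset.univ.image u).card = 2 * r + 1 := by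
      rw [Finset.card_image_of_injective _ hu, Finset.card_univ, Fintype.card_fin]
    have := Finset.card_le_card hsub
    omega
  have HH : ∀ (A : Finset S), A.card ≤ 2 * r → ∀ f : S → S, Set.InjOn f A →
      ∃ g : G, ∀ a ∈ A, g • a = f a :=
    fun A hA f hf => auxStab_trans_finset htrans hS A hA f hf
  have L1 := fun Γ Γ' hΓ hΓ' hk => auxStab_L1 (G := G) HH Δ hcard Γ Γ' hΓ hΓ' hk
  have stab_iff : ∀ g : G, g ∈ MulAction.stabilizer G (Δ : Set S) ↔ g • Δ = Δ := by
    intro g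
    rw [MulAction.mem_stabilizer_iff, ← Finset.coe_smul_finset, Finset.coe_inj]
  constructor
  · -- stabilizer ≠ ⊤
    intro htop
    obtain ⟨d, hd⟩ := Finset.card_pos.1 (by omega : 0 < Δ.card)
    obtain ⟨x, hx⟩ := hS Δ (by omega)
    obtain ⟨g, hg⟩ : ∃ g : G, g • d = x := by
      have hf : Set.InjOn (fun _ => x) (({d} : Finset S) : Set S) := by
        intro a ha b hb _
        simp only [Finset.coe_singleton, Set.mem_singleton_iff] at ha hb
        rw [ha, hb]
      obtain ⟨g, hg⟩ := HH {d} (by simp only [Finset.card_singleton]; omega) (fun _ => x) hf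
      exact ⟨g, hg d (Finset.mem_singleton_self d)⟩
    have hgst : g • Δ = Δ := (stab_iff g).1 (htop ▸ Subgroup.mem_top g)
    have : g • d ∈ g • Δ := Finset.smul_mem_smul_finset hd
    rw [hgst, hg] at this
    exact hx this
  · -- maximality
    intro H hH
    obtain ⟨h, hhH, hhst⟩ := SetLike.exists_of_lt hH
    have hstle : MulAction.stabilizer G (Δ : Set S) ≤ H := le_of_lt hH
    set k := (Δ ∩ h • Δ).card with hkdef
    have hcs : (h • Δ).card = r := by rw [Finset.card_smul_finset, hcard]
    have hkr : k < r := by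
      have hne : h • Δ ≠ Δ := fun e => hhst ((stab_iff h).2 e)
      have hle : (Δ ∩ h • Δ).card ≤ r := by
        calc (Δ ∩ h • Δ).card ≤ Δ.card := Finset.card_le_card Finset.inter_subset_left
          _ = r := hcard
      rcases lt_or_eq_of_le hle with hlt | heq
      · exact hlt
      · exfalso
        have h1 : Δ ∩ h • Δ = Δ :=
          Finset.eq_of_subset_of_card_le Finset.inter_subset_left (by omega)
        have h2 : Δ ⊆ h • Δ := Finset.inter_eq_left.1 h1
        exact hne (Finset.eq_of_subset_of_card_le h2 (by omega)).symm
    -- claim A: every Θ of card r with (Δ ∩ Θ).card = k is in the H-orbit of Δ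
    have claimA : ∀ Θ : Finset S, Θ.card = r → (Δ ∩ Θ).card = k →
        ∃ h' ∈ H, h' • Δ = Θ := by
      intro Θ hΘ hkΘ
      obtain ⟨g, hgΔ, hgΓ⟩ := L1 (h • Δ) Θ hcs hΘ (by rw [← hkdef, hkΘ])
      refine ⟨g * h, H.mul_mem (hstle ((stab_iff g).2 hgΔ)) hhH, ?_⟩
      rw [mul_smul, hgΓ]
    -- step L2
    have stepL2 : ∀ Γ : Finset S, Γ.card = r → (∃ h' ∈ H, h' • Δ = Γ) →
        ∀ Ω : Finset S, Ω.card = r → (Γ ∩ Ω).card = k → ∃ h' ∈ H, h' • Δ = Ω := by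
      rintro Γ hΓ ⟨h', hh'H, hΓeq⟩ Ω hΩ hkΩ
      have hΘc : (h'⁻¹ • Ω).card = r := by rw [Finset.card_smul_finset, hΩ]
      have hΘk : (Δ ∩ h'⁻¹ • Ω).card = k := by
        have hΔ : Δ = h'⁻¹ • Γ := by rw [← hΓeq, inv_smul_smul]
        rw [hΔ, ← Finset.smul_finset_inter, Finset.card_smul_finset, hkΩ]
      obtain ⟨h'', hh''H, hh''⟩ := claimA (h'⁻¹ • Ω) hΘc hΘk
      refine ⟨h' * h'', H.mul_mem hh'H hh''H, ?_⟩
      rw [mul_smul, hh'', smul_inv_smul]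
    -- step C : one-element swaps stay in the orbit
    have stepC : ∀ Γ : Finset S, Γ.card = r → (∃ h' ∈ H, h' • Δ = Γ) →
        ∀ Γ' : Finset S, Γ'.card = r → (Γ ∩ Γ').card + 1 = r → ∃ h' ∈ H, h' • Δ = Γ' := by
      intro Γ hΓ hΓorb Γ' hΓ' hΓΓ'
      obtain ⟨K, hKsub, hKcard⟩ := Finset.exists_subset_card_eq
        (show k ≤ (Γ ∩ Γ').card by omega)
      have hunion : (Γ ∪ Γ').card = r + 1 := by
        have := Finset.card_union_add_card_inter Γ Γ'
        omega
      set U := (Finset.univ.image u) \ (Γ ∪ Γ') with hUdef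
      have hUcard : r ≤ U.card := by
        have h1 := Finset.le_card_sdiff (Γ ∪ Γ') (Finset.univ.image u)
        rw [← hUdef] at h1
        have h2 : (Finset.univ.image u).card = 2 * r + 1 := by
          rw [Finset.card_image_of_injective _ hu, Finset.card_univ, Fintype.card_fin]
        omega
      obtain ⟨F, hFsub, hFcard⟩ := Finset.exists_subset_card_eq
        (show r - k ≤ U.card by omega)
      have hFdisj : ∀ x ∈ F, x ∉ Γ ∪ Γ' := by
        intro x hx
        have := hFsub hx
        rw [hUdef, Finset.mem_sdiff] at this
        exact this.2
      have hKF : Disjoint K F := by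
        rw [Finset.disjoint_left]
        intro x hxK hxF
        exact hFdisj x hxF (Finset.mem_union_left _ (Finset.inter_subset_left (hKsub hxK)))
      set Ω := K ∪ F with hΩdef
      have hΩcard : Ω.card = r := by
        rw [hΩdef, Finset.card_union_of_disjoint hKF, hKcard, hFcard]
        omega
      have hΓΩ : Γ ∩ Ω = K := by
        rw [hΩdef, Finset.inter_union_distrib_left]
        have e1 : Γ ∩ K = K := Finset.inter_eq_right.2
          (fun x hx => Finset.inter_subset_left (hKsub hx))
        have e2 : Γ ∩ F = ∅ := by
          rw [Finset.eq_empty_iff_forall_notMem]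
          intro x hx
          rw [Finset.mem_inter] at hx
          exact hFdisj x hx.2 (Finset.mem_union_left _ hx.1)
        rw [e1, e2, Finset.union_empty]
      have hΓ'Ω : Γ' ∩ Ω = K := by
        rw [hΩdef, Finset.inter_union_distrib_left]
        have e1 : Γ' ∩ K = K := Finset.inter_eq_right.2
          (fun x hx => Finset.inter_subset_right (hKsub hx))
        have e2 : Γ' ∩ F = ∅ := by
          rw [Finset.eq_empty_iff_forall_notMem]
          intro x hx
          rw [Finset.mem_inter] at hx
          exact hFdisj x hx.2 (Finset.mem_union_right _ hx.1)
        rw [e1, e2, Finset.union_empty]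
      have hΩorb : ∃ h' ∈ H, h' • Δ = Ω :=
        stepL2 Γ hΓ hΓorb Ω hΩcard (by rw [hΓΩ, hKcard])
      exact stepL2 Ω hΩcard hΩorb Γ' hΓ' (by rw [Finset.inter_comm, hΓ'Ω, hKcard])
    -- main induction on |Γ \ Δ|
    have main : ∀ d : ℕ, ∀ Γ : Finset S, Γ.card = r → (Γ \ Δ).card = d →
        ∃ h' ∈ H, h' • Δ = Γ := by
      intro d
      induction d with
      | zero =>
        intro Γ hΓ hd
        have hsub : Γ ⊆ Δ := by
          rw [← Finset.sdiff_eq_empty_iff_subset]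
          exact Finset.card_eq_zero.1 hd
        have : Γ = Δ := Finset.eq_of_subset_of_card_le hsub (by omega)
        exact ⟨1, H.one_mem, by rw [one_smul, this]⟩
      | succ d ih =>
        intro Γ hΓ hd
        obtain ⟨x, hx⟩ := Finset.card_pos.1 (by omega : 0 < (Γ \ Δ).card)
        have hΔΓcard : 0 < (Δ \ Γ).card := by
          have h1 := Finset.card_sdiff_add_card_inter Γ Δ
          have h2 := Finset.card_sdiff_add_card_inter Δ Γ
          rw [Finset.inter_comm] at h1
          omega
        obtain ⟨y, hy⟩ := Finset.card_pos.1 hΔΓcard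
        rw [Finset.mem_sdiff] at hx hy
        set Γ' := insert y (Γ.erase x) with hΓ'def
        have hynot : y ∉ Γ.erase x := fun hc => hy.2 (Finset.erase_subset _ _ hc)
        have hΓ'card : Γ'.card = r := by
          rw [hΓ'def, Finset.card_insert_of_notMem hynot,
            Finset.card_erase_of_mem hx.1, hΓ]
          omega
        have hΓ'd : (Γ' \ Δ).card = d := by
          have he : Γ' \ Δ = (Γ \ Δ).erase x := by
            ext z
            simp only [hΓ'def, Finset.mem_sdiff, Finset.mem_insert, Finset.mem_erase]
            constructor
            · rintro ⟨hz1 | hz1, hz2⟩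
              · exact absurd (hz1 ▸ hy.1) hz2
              · exact ⟨hz1.1, hz1.2, hz2⟩
            · rintro ⟨hz1, hz2, hz3⟩
              exact ⟨Or.inr ⟨hz1, hz2⟩, hz3⟩
          rw [he, Finset.card_erase_of_mem (Finset.mem_sdiff.2 hx), hd]
          omega
        have hΓ'orb := ih Γ' hΓ'card hΓ'd
        apply stepC Γ' hΓ'card hΓ'orb Γ hΓ
        have he : Γ' ∩ Γ = Γ.erase x := by
          ext z
          simp only [hΓ'def, Finset.mem_inter, Finset.mem_insert, Finset.mem_erase]
          constructor
          · rintro ⟨hz1 | hz1, hz2⟩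
            · exact absurd (hz1 ▸ hz2) hy.2
            · exact hz1
          · intro hz
            exact ⟨Or.inr hz, hz.2⟩
        rw [he, Finset.card_erase_of_mem hx.1, hΓ]
        omega
    -- conclude
    rw [Subgroup.eq_top_iff']
    intro g
    have hgc : (g • Δ).card = r := by rw [Finset.card_smul_finset, hcard]
    obtain ⟨h', hh'H, hh'⟩ := main ((g • Δ \ Δ).card) (g • Δ) hgc rfl
    have hst : h'⁻¹ * g ∈ MulAction.stabilizer G (Δ : Set S) := by
      rw [stab_iff, mul_smul, ← hh', inv_smul_smul]
    have hmem : h'⁻¹ * g ∈ H := hstle hst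
    have hfin := H.mul_mem hh'H hmem
    rwa [← mul_assoc, mul_inv_cancel, one_mul] at hfin
end

section
/- Let k be a finite field of characteristic 2, let n ≥ 2, and let Δ ⊂ kⁿ be a nonempty proper subset. Then the setwise stabilizer Aut(A^n, Δ) = {φ ∈ Aut(A^n_k) : the induced bijection of kⁿ maps Δ onto Δ} is a maximal proper subgroup of Aut(A^n_k) if and only if 2·|Δ| ≠ |k|ⁿ. -/
/-!
Automorphisms `φ` act on `kⁿ` through a homomorphism `pointPerm` to `Sym(kⁿ)` (the bijection of
the statement is `(pointPerm φ)⁻¹`), and the stabilizer of `Δ` is the preimage of its setwise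
stabilizer in `Sym(kⁿ)`; it is maximal iff that stabilizer is maximal in the image `G`.

In characteristic 2 every substitution `Xᵢ ↦ Xᵢ + Pᵢ` fixing the `Pᵢ` is an involution.
Translations, transvections and translations of a single coordinate line are of this form. The
first two make `G` 2-transitive, hence primitive, and the square of the product of two line
translations in different directions is a 3-cycle, so `G` contains the alternating group by
Jordan's theorem. Thus `G` is `Alt(kⁿ)` or `Sym(kⁿ)`, where the stabilizer of `Δ` is maximal when
`2|Δ| ≠ |k|ⁿ` by the intransitive case of the O'Nan–Scott theorem. When `2|Δ| = |k|ⁿ` it is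
properly contained in the stabilizer of the partition `{Δ, Δᶜ}`, which is a proper subgroup.
-/

open MulAction Equiv Equiv.Perm
open scoped Pointwise

namespace Subgroup

variable {G N : Type*} [Group G] [Group N]

theorem isCoatom_comap_iff_of_surjective {f : G →* N} (hf : Function.Surjective f)
    {K : Subgroup N} : IsCoatom (K.comap f) ↔ IsCoatom K := by
  refine ⟨fun h => ⟨fun hK => h.1 (by rw [hK, comap_top]), fun L hL => ?_⟩,
    isCoatom_comap_of_surjective hf⟩
  have := h.2 _ ((comap_lt_comap_of_surjective hf).mpr hL)
  exact comap_injective hf (this.trans (comap_top (f := f)).symm)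

theorem isCoatom_comap_iff_subgroupOf_range (f : G →* N) (K : Subgroup N) :
    IsCoatom (K.comap f) ↔ IsCoatom (K.subgroupOf f.range) := by
  rw [← isCoatom_comap_iff_of_surjective f.rangeRestrict_surjective, subgroupOf, comap_comap,
    f.subtype_comp_rangeRestrict]

end Subgroup

namespace MulAction

variable {G α : Type*} [Group G] [MulAction G α]

theorem mem_stabilizer_pair_compl_iff {g : G} {s : Set α} :
    g ∈ stabilizer G ({s, sᶜ} : Set (Set α)) ↔ g • s = s ∨ g • s = sᶜ := by
  rw [mem_stabilizer_iff, Set.smul_set_insert, Set.smul_set_singleton, Set.smul_set_compl]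
  constructor
  · intro h
    have : g • s ∈ ({s, sᶜ} : Set (Set α)) := h ▸ Set.mem_insert _ _
    simpa using this
  · rintro (h | h)
    · rw [h]
    · rw [h, compl_compl, Set.pair_comm]

end MulAction

namespace Equiv.Perm

variable {α : Type*} [Fintype α] [DecidableEq α]

theorem eq_alternatingGroup_or_eq_top_of_le [Nontrivial α] {G : Subgroup (Perm α)}
    (hG : alternatingGroup α ≤ G) : G = alternatingGroup α ∨ G = ⊤ := by
  have hdvd := Subgroup.index_dvd_of_le hG
  rw [alternatingGroup.index_eq_two] at hdvd
  rcases (Nat.dvd_prime Nat.prime_two).mp hdvd with h | h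
  · exact Or.inr (Subgroup.index_eq_one.mp h)
  · exact Or.inl (eq_alternatingGroup_of_index_eq_two h)

theorem exists_mem_alternatingGroup_smul_eq (hα : 3 ≤ Nat.card α) {s t : Set α}
    (h : s.ncard = t.ncard) : ∃ g ∈ alternatingGroup α, g • s = t := by
  have := Set.powersetCard.isPretransitive_alternatingGroup (n := s.ncard) hα
  obtain ⟨g, hg⟩ := exists_smul_eq (alternatingGroup α)
    (Set.powersetCard.ofCard (Set.ncard_eq_toFinset_card s).symm)
    (Set.powersetCard.ofCard (h ▸ (Set.ncard_eq_toFinset_card t).symm))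
  refine ⟨g, g.2, ?_⟩
  have hcoe := congrArg ((↑) : Finset α → Set α)
    (Set.powersetCard.coe_smul.symm.trans (congrArg Subtype.val hg))
  simp only [Finset.coe_smul_finset, Set.powersetCard.val_ofCard, Set.Finite.coe_toFinset] at hcoe
  exact hcoe

-- The stabilizer of the partition `{s, sᶜ}` lies strictly between the stabilizer of `s` and `G`.
theorem not_isCoatom_subgroupOf_stabilizer {G : Subgroup (Perm α)} (hG : alternatingGroup α ≤ G)
    {s : Set α} (hs : s.Nontrivial) (hsc : sᶜ.Nonempty) (hcard : s.ncard = sᶜ.ncard) :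
    ¬ IsCoatom ((stabilizer (Perm α) s).subgroupOf G) := by
  intro hmax
  set M := stabilizer (Perm α) ({s, sᶜ} : Set (Set α))
  obtain ⟨a, ha, b, hb, hab⟩ := hs
  obtain ⟨c, hc⟩ := hsc
  have hac : a ≠ c := fun h => hc (h ▸ ha)
  have hbc : b ≠ c := fun h => hc (h ▸ hb)
  have hα : 3 ≤ Nat.card α := by
    rw [← Set.ncard_univ, ← Set.ncard_eq_three.mpr ⟨a, b, c, hab, hac, hbc, rfl⟩]
    exact Set.ncard_le_ncard (Set.subset_univ _)
  obtain ⟨τ, hτ, hτs⟩ := exists_mem_alternatingGroup_smul_eq hα hcard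
  have hlt : (stabilizer (Perm α) s).subgroupOf G < M.subgroupOf G := by
    refine lt_of_le_of_ne (fun g hg => mem_stabilizer_pair_compl_iff.mpr (Or.inl hg)) fun h => ?_
    have : (⟨τ, hG hτ⟩ : G) ∈ M.subgroupOf G := mem_stabilizer_pair_compl_iff.mpr (Or.inr hτs)
    rw [← h, Subgroup.mem_subgroupOf, mem_stabilizer_iff, hτs] at this
    exact (show a ∈ sᶜ by rwa [this]) ha
  have hcycle : (swap a b * swap a c).IsThreeCycle := isThreeCycle_swap_mul_swap_same hab hac hbc
  have : (⟨_, hG hcycle.mem_alternatingGroup⟩ : G) ∈ M.subgroupOf G := by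
    rw [hmax.2 _ hlt]
    trivial
  have hga : (swap a b * swap a c) • a = c := by
    rw [Perm.smul_def, mul_apply, swap_apply_left, swap_apply_of_ne_of_ne hac.symm hbc.symm]
  have hgb : (swap a b * swap a c) • b = a := by
    rw [Perm.smul_def, mul_apply, swap_apply_of_ne_of_ne hab.symm hbc, swap_apply_right]
  have hmem_a := Set.smul_mem_smul_set (a := swap a b * swap a c) ha
  have hmem_b := Set.smul_mem_smul_set (a := swap a b * swap a c) hb
  rw [hga] at hmem_a
  rw [hgb] at hmem_b
  rcases mem_stabilizer_pair_compl_iff.mp this with h | h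
  · exact hc (h ▸ hmem_a)
  · exact (h ▸ hmem_b) ha

theorem isCoatom_subgroupOf_stabilizer_iff {G : Subgroup (Perm α)} (hG : alternatingGroup α ≤ G)
    (hα : 4 ≤ Nat.card α) {s : Set α} (hs : s.Nonempty) (hsc : sᶜ.Nonempty) :
    IsCoatom ((stabilizer (Perm α) s).subgroupOf G) ↔ Nat.card α ≠ 2 * s.ncard := by
  have hsum := Set.ncard_add_ncard_compl s
  refine ⟨fun hmax hcard => not_isCoatom_subgroupOf_stabilizer hG ?_ hsc (by omega) hmax,
    fun hcard => ?_⟩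
  · exact Set.one_lt_ncard_iff_nontrivial.mp (by omega)
  have : Nontrivial α := Finite.one_lt_card_iff_nontrivial.mp (by omega)
  rcases eq_alternatingGroup_or_eq_top_of_le hG with rfl | rfl
  · exact alternatingGroup.isCoatom_stabilizer hs hsc hcard
  · exact Subgroup.isCoatom_comap_of_surjective (fun g => ⟨⟨g, trivial⟩, rfl⟩)
      (isCoatom_stabilizer hs hsc hcard)

end Equiv.Perm

namespace MvPolynomial

variable {σ : Type*}

section PointPerm

variable {R : Type*} [CommSemiring R]

/-- `comap φ` reverses composition, so the action on points is through its inverse. -/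
noncomputable def pointPerm : (MvPolynomial σ R ≃ₐ[R] MvPolynomial σ R) →* Perm (σ → R) where
  toFun φ := (comapEquiv φ).symm
  map_one' := by
    ext x i
    exact congrFun (comap_id_apply x) i
  map_mul' φ ψ := by
    ext x i
    exact congrFun (comap_comp_apply φ.symm.toAlgHom ψ.symm.toAlgHom x) i

theorem pointPerm_apply (φ : MvPolynomial σ R ≃ₐ[R] MvPolynomial σ R) (x : σ → R) (i : σ) :
    pointPerm φ x i = aeval x (φ.symm (X i)) := rfl

theorem coe_comap_pointPerm_stabilizer (Δ : Set (σ → R)) :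
    ((stabilizer (Perm (σ → R)) Δ).comap pointPerm :
        Set (MvPolynomial σ R ≃ₐ[R] MvPolynomial σ R)) =
      {φ | (fun p j => aeval p (φ (X j))) '' Δ = Δ} := by
  ext φ
  rw [SetLike.mem_coe, Subgroup.mem_comap, ← inv_mem_iff, mem_stabilizer_iff]
  rfl

end PointPerm

theorem exists_lineIndicator [Fintype σ] [DecidableEq σ] {k : Type*} [Field k] [Fintype k]
    [DecidableEq k] (i : σ) (a : σ → k) :
    ∃ δ : MvPolynomial σ k, (∀ v, eval v δ = if ∀ l ≠ i, v l = a l then 1 else 0) ∧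
      ∀ f : σ → MvPolynomial σ k, (∀ l ≠ i, f l = X l) → aeval f δ = δ := by
  refine ⟨rename Subtype.val (indicator fun l : {l // l ≠ i} => a l), fun v => ?_, fun f hf => ?_⟩
  · rw [eval_rename]
    split_ifs with h
    · have hv : v ∘ Subtype.val = fun l : {l // l ≠ i} => a l :=
        _root_.funext fun l => h l.1 l.2
      rw [hv]
      exact eval_indicator_apply_eq_one _
    · refine eval_indicator_apply_eq_zero _ _ fun h' => h fun l hl => ?_
      exact congrFun h' ⟨l, hl⟩
  · have hf' : f ∘ Subtype.val = X ∘ Subtype.val :=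
      _root_.funext fun l : {l // l ≠ i} => hf l.1 l.2
    rw [aeval_rename, hf', ← aeval_rename, aeval_X_left_apply]

section CharTwo

variable {k : Type*} [CommRing k] [CharP k 2]

/-- In characteristic 2, the substitution `Xᵢ ↦ Xᵢ + Pᵢ` is its own inverse once it fixes
every `Pᵢ`. -/
theorem exists_mem_range_pointPerm_add_eval (P : σ → MvPolynomial σ k)
    (hP : ∀ i, aeval (fun j => X j + P j) (P i) = P i) :
    ∃ g ∈ (pointPerm (σ := σ) (R := k)).range, ∀ v i, g v i = v i + eval v (P i) := by
  have hinv : (aeval fun j => X j + P j).comp (aeval fun j => X j + P j) =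
      AlgHom.id k (MvPolynomial σ k) := by
    refine algHom_ext fun i => ?_
    rw [AlgHom.comp_apply, aeval_X, map_add, aeval_X, hP, add_assoc, CharTwo.add_self_eq_zero,
      add_zero, AlgHom.id_apply]
  refine ⟨pointPerm (AlgEquiv.ofAlgHom _ _ hinv hinv), ⟨_, rfl⟩, fun v i => ?_⟩
  simp [pointPerm_apply]

theorem exists_mem_range_pointPerm_add (c : σ → k) :
    ∃ g ∈ (pointPerm (σ := σ) (R := k)).range, ∀ v, g v = v + c := by
  obtain ⟨g, hg, hgv⟩ := exists_mem_range_pointPerm_add_eval (fun i => C (c i)) (by simp)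
  exact ⟨g, hg, fun v => by ext i; simp [hgv]⟩

theorem exists_mem_range_pointPerm_transvection {m : σ} {d : σ → k} (hd : d m = 0) :
    ∃ g ∈ (pointPerm (σ := σ) (R := k)).range, ∀ v, g v = v + v m • d := by
  obtain ⟨g, hg, hgv⟩ := exists_mem_range_pointPerm_add_eval (fun i => C (d i) * X m)
    (by simp [hd])
  exact ⟨g, hg, fun v => by ext i; simp [hgv, mul_comm]⟩

end CharTwo

theorem exists_mem_range_pointPerm_lineShift [Fintype σ] [DecidableEq σ] {k : Type*} [Field k]
    [Fintype k] [DecidableEq k] [CharP k 2] (i : σ) (a : σ → k) (c : k) :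
    ∃ g ∈ (pointPerm (σ := σ) (R := k)).range,
      ∀ v, g v = if ∀ l ≠ i, v l = a l then v + Pi.single i c else v := by
  obtain ⟨δ, hδ_eval, hδ_fix⟩ := exists_lineIndicator i a
  obtain ⟨g, hg, hgv⟩ := exists_mem_range_pointPerm_add_eval
    (fun l => if l = i then C c * δ else 0) fun l => by
      split_ifs with hl
      · rw [map_mul, aeval_C, algebraMap_eq, hδ_fix _ fun m hm => by simp [hm]]
      · rw [map_zero]
  refine ⟨g, hg, fun v => ?_⟩
  ext l
  rw [hgv]
  rcases eq_or_ne l i with rfl | hl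
  · rw [if_pos rfl, map_mul, eval_C, hδ_eval]
    split_ifs <;> simp
  · rw [if_neg hl, map_zero, add_zero]
    split_ifs <;> simp [hl]

-- Both shifts are involutions supported on coordinate lines meeting only at `0`: their product
-- is the 3-cycle `0 → eⱼ → eᵢ → 0` times an involution, so its square is a 3-cycle.
theorem lineShift_mul_lineShift_sq {k : Type*} [Ring k] [CharP k 2] [Nontrivial k]
    [DecidableEq k] [Fintype σ] [DecidableEq σ] {i j : σ} (hij : i ≠ j) {A B : Perm (σ → k)}
    (hA : ∀ v, A v = if ∀ l ≠ i, v l = 0 then v + Pi.single i 1 else v)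
    (hB : ∀ v, B v = if ∀ l ≠ j, v l = 0 then v + Pi.single j 1 else v) :
    (A * B) ^ 2 = swap 0 (Pi.single j 1) * swap 0 (Pi.single i 1) := by
  have : Nonempty σ := ⟨i⟩
  have hA_on : ∀ {v}, (∀ l ≠ i, v l = 0) → A v = v + Pi.single i 1 := fun h => by
    rw [hA, if_pos h]
  have hA_off : ∀ {v}, ¬ (∀ l ≠ i, v l = 0) → A v = v := fun h => by rw [hA, if_neg h]
  have hB_on : ∀ {v}, (∀ l ≠ j, v l = 0) → B v = v + Pi.single j 1 := fun h => by
    rw [hB, if_pos h]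
  have hB_off : ∀ {v}, ¬ (∀ l ≠ j, v l = 0) → B v = v := fun h => by rw [hB, if_neg h]
  have hzero : ∀ m : σ, ∀ l ≠ m, (0 : σ → k) l = 0 := fun _ _ _ => rfl
  have hsingle : ∀ m : σ, ∀ l ≠ m, (Pi.single m 1 : σ → k) l = 0 :=
    fun _ _ hl => Pi.single_eq_of_ne hl 1
  have hnot_single : ∀ {m n : σ}, m ≠ n → ¬ ∀ l ≠ m, (Pi.single n 1 : σ → k) l = 0 :=
    fun hmn h => one_ne_zero (α := k) (by simpa using h _ hmn.symm)
  have hadd_single : ∀ {m : σ} {v : σ → k}, (∀ l ≠ m, v l = 0) →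
      ∀ l ≠ m, (v + Pi.single m 1 : σ → k) l = 0 :=
    fun hv l hl => by rw [Pi.add_apply, hv l hl, hsingle _ l hl, add_zero]
  have hinter : ∀ {v : σ → k}, (∀ l ≠ i, v l = 0) → (∀ l ≠ j, v l = 0) → v = 0 := by
    intro v hi hj
    ext l
    rcases eq_or_ne l i with rfl | hl
    exacts [hj l hij, hi l hl]
  have hsi : (Pi.single i 1 : σ → k) ≠ 0 := fun h => hnot_single hij.symm (h ▸ hzero j)
  have hsj : (Pi.single j 1 : σ → k) ≠ 0 := fun h => hnot_single hij (h ▸ hzero i)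
  have hsij : (Pi.single i 1 : σ → k) ≠ Pi.single j 1 := fun h => hnot_single hij (h ▸ hsingle i)
  ext1 v
  rw [sq, Perm.mul_apply, Perm.mul_apply, Perm.mul_apply]
  by_cases hv0 : v = 0
  · subst hv0
    rw [hB_on (hzero j), zero_add, hA_off (hnot_single hij), hB_on (hsingle j),
      CharTwo.add_self_eq_zero, hA_on (hzero i), zero_add, Perm.mul_apply, swap_apply_left,
      swap_apply_of_ne_of_ne hsi hsij]
  by_cases hvi : v = Pi.single i 1
  · subst hvi
    rw [hB_off (hnot_single hij.symm), hA_on (hsingle i), CharTwo.add_self_eq_zero,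
      hB_on (hzero j), zero_add, hA_off (hnot_single hij), Perm.mul_apply, swap_apply_right,
      swap_apply_left]
  by_cases hvj : v = Pi.single j 1
  · subst hvj
    rw [hB_on (hsingle j), CharTwo.add_self_eq_zero, hA_on (hzero i), zero_add,
      hB_off (hnot_single hij.symm), hA_on (hsingle i), CharTwo.add_self_eq_zero, Perm.mul_apply,
      swap_apply_of_ne_of_ne hsj (Ne.symm hsij), swap_apply_right]
  rw [Perm.mul_apply, swap_apply_of_ne_of_ne hv0 hvi, swap_apply_of_ne_of_ne hv0 hvj]
  by_cases hi : ∀ l ≠ i, v l = 0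
  · have hj' : ¬ ∀ l ≠ j, (v + Pi.single i 1 : σ → k) l = 0 := fun hj' =>
      hvi (CharTwo.add_eq_zero.mp (hinter (hadd_single hi) hj'))
    rw [hB_off fun hj => hv0 (hinter hi hj), hA_on hi, hB_off hj', hA_on (hadd_single hi),
      CharTwo.add_cancel_right]
  by_cases hj : ∀ l ≠ j, v l = 0
  · have hi' : ¬ ∀ l ≠ i, (v + Pi.single j 1 : σ → k) l = 0 := fun hi' =>
      hvj (CharTwo.add_eq_zero.mp (hinter hi' (hadd_single hj)))
    rw [hB_on hj, hA_off hi', hB_on (hadd_single hj), CharTwo.add_cancel_right, hA_off hi]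
  rw [hB_off hj, hA_off hi, hB_off hj, hA_off hi]

section Field

variable {k : Type*} [Field k] [CharP k 2]

theorem exists_mem_range_pointPerm_of_apply_eq {v w : σ → k} {m : σ} (hm : v m = w m)
    (hv : v m ≠ 0) : ∃ g ∈ (pointPerm (σ := σ) (R := k)).range, g 0 = 0 ∧ g v = w := by
  obtain ⟨g, hg, hgv⟩ :=
    exists_mem_range_pointPerm_transvection (m := m) (d := (v m)⁻¹ • (w - v)) (by simp [hm])
  refine ⟨g, hg, by simp [hgv], ?_⟩
  rw [hgv, smul_smul, mul_inv_cancel₀ hv, one_smul, add_sub_cancel]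

theorem exists_mem_range_pointPerm_of_ne_zero [Nontrivial σ] {v w : σ → k} (hv : v ≠ 0)
    (hw : w ≠ 0) : ∃ g ∈ (pointPerm (σ := σ) (R := k)).range, g 0 = 0 ∧ g v = w := by
  have trans : ∀ {u₁ u₂ u₃ : σ → k},
      (∃ g ∈ (pointPerm (σ := σ) (R := k)).range, g 0 = 0 ∧ g u₁ = u₂) →
      (∃ g ∈ (pointPerm (σ := σ) (R := k)).range, g 0 = 0 ∧ g u₂ = u₃) →
      ∃ g ∈ (pointPerm (σ := σ) (R := k)).range, g 0 = 0 ∧ g u₁ = u₃ := by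
    rintro _ _ _ ⟨g, hg, hg0, hgu⟩ ⟨h, hh, hh0, hhu⟩
    exact ⟨h * g, mul_mem hh hg, by simp [hg0, hh0], by simp [hgu, hhu]⟩
  have step : ∀ {v w : σ → k} {m p : σ}, m ≠ p → v m ≠ 0 → w p ≠ 0 →
      ∃ g ∈ (pointPerm (σ := σ) (R := k)).range, g 0 = 0 ∧ g v = w := by
    intro v w m p hmp hv hw
    classical
    exact trans (exists_mem_range_pointPerm_of_apply_eq (w := Function.update v p (w p))
      (by simp [hmp]) hv) (exists_mem_range_pointPerm_of_apply_eq (m := p) (by simp) (by simpa))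
  obtain ⟨m, hm⟩ := Function.ne_iff.mp hv
  obtain ⟨p, hp⟩ := Function.ne_iff.mp hw
  rcases ne_or_eq m p with hmp | rfl
  · exact step hmp hm hp
  · classical
    obtain ⟨q, hq⟩ := exists_ne m
    exact trans (exists_mem_range_pointPerm_of_apply_eq (w := Function.update v q 1)
      (by simp [hq.symm]) hm) (step hq (by simp) hp)

theorem isMultiplyPretransitive_range_pointPerm [Nontrivial σ] :
    IsMultiplyPretransitive (pointPerm (σ := σ) (R := k)).range (σ → k) 2 := by
  rw [is_two_pretransitive_iff]
  intro x y x' y' hxy hxy'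
  have hsub : ∀ {a b : σ → k}, a ≠ b → b + a ≠ 0 := fun hab h => hab (CharTwo.add_eq_zero.mp h).symm
  obtain ⟨t, ht, htv⟩ := exists_mem_range_pointPerm_add x
  obtain ⟨t', ht', ht'v⟩ := exists_mem_range_pointPerm_add x'
  obtain ⟨g, hg, hg0, hgv⟩ := exists_mem_range_pointPerm_of_ne_zero (hsub hxy) (hsub hxy')
  refine ⟨⟨t' * g * t, mul_mem (mul_mem ht' hg) ht⟩, ?_, ?_⟩
  · simp [Subgroup.smul_def, htv, ht'v, CharTwo.add_self_eq_zero, hg0]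
  · simp [Subgroup.smul_def, htv, ht'v, hgv, add_assoc, CharTwo.add_self_eq_zero]

variable [Fintype σ] [DecidableEq σ] [Nontrivial σ] [Fintype k] [DecidableEq k]

theorem exists_isThreeCycle_mem_range_pointPerm :
    ∃ g ∈ (pointPerm (σ := σ) (R := k)).range, g.IsThreeCycle := by
  obtain ⟨i, j, hij⟩ := exists_pair_ne σ
  obtain ⟨A, hA, hAv⟩ := exists_mem_range_pointPerm_lineShift i 0 (1 : k)
  obtain ⟨B, hB, hBv⟩ := exists_mem_range_pointPerm_lineShift j 0 (1 : k)
  refine ⟨(A * B) ^ 2, pow_mem (mul_mem hA hB) 2, ?_⟩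
  rw [lineShift_mul_lineShift_sq hij hAv hBv]
  have hsingle : ∀ m : σ, (0 : σ → k) ≠ Pi.single m 1 :=
    fun m h => one_ne_zero (Pi.single_eq_zero_iff.mp h.symm)
  exact isThreeCycle_swap_mul_swap_same (hsingle j) (hsingle i) fun h => by
    simpa [hij] using congrFun h i

theorem alternatingGroup_le_range_pointPerm :
    alternatingGroup (σ → k) ≤ (pointPerm (σ := σ) (R := k)).range := by
  obtain ⟨g, hg, hg3⟩ := exists_isThreeCycle_mem_range_pointPerm (σ := σ) (k := k)
  exact alternatingGroup_le_of_isPreprimitive_of_isThreeCycle_mem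
    (isPreprimitive_of_is_two_pretransitive isMultiplyPretransitive_range_pointPerm) hg3 hg

end Field

end MvPolynomial

open MvPolynomial

/-- over a finite field of characteristic 2, the setwise stabilizer of a
nonempty proper subset `Δ ⊂ kⁿ` (`n ≥ 2`) is a maximal proper subgroup of the
automorphism group of affine `n`-space if and only if `2·|Δ| ≠ |k|ⁿ`. -/
theorem stabilizer_finite_set_maximal_char_two {k : Type*} [Field k] [Finite k]
    [CharP k 2] (n : ℕ) (hn : 2 ≤ n)
    (Δ : Set (Fin n → k)) (hne : Δ.Nonempty) (hproper : Δ ≠ Set.univ) :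
    (∃ H : Subgroup (MvPolynomial (Fin n) k ≃ₐ[k] MvPolynomial (Fin n) k),
      (H : Set (MvPolynomial (Fin n) k ≃ₐ[k] MvPolynomial (Fin n) k))
          = {φ | (fun p : Fin n → k => fun j => aeval p (φ (X j))) '' Δ = Δ} ∧
        IsCoatom H) ↔
      2 * Nat.card Δ ≠ Nat.card (Fin n → k) := by
  cases nonempty_fintype k
  let := Classical.decEq k
  have : Nontrivial (Fin n) := Fin.nontrivial_iff_two_le.mpr hn
  have hcard : 4 ≤ Nat.card (Fin n → k) := by
    rw [Nat.card_fun, Nat.card_eq_fintype_card (α := Fin n), Fintype.card_fin]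
    calc 4 = 2 ^ 2 := rfl
      _ ≤ 2 ^ n := Nat.pow_le_pow_right two_pos hn
      _ ≤ Nat.card k ^ n := Nat.pow_le_pow_left Finite.one_lt_card n
  have hmax : IsCoatom ((stabilizer (Perm (Fin n → k)) Δ).comap pointPerm) ↔
      2 * Nat.card Δ ≠ Nat.card (Fin n → k) := by
    rw [Subgroup.isCoatom_comap_iff_subgroupOf_range,
      Perm.isCoatom_subgroupOf_stabilizer_iff alternatingGroup_le_range_pointPerm hcard hne
        (Set.nonempty_compl.mpr hproper), Nat.card_coe_set_eq, ne_comm]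
  rw [← coe_comap_pointPerm_stabilizer, ← hmax]
  exact ⟨fun ⟨H, hH, h⟩ => SetLike.coe_injective hH ▸ h, fun h => ⟨_, rfl, h⟩⟩
end

section
/- Let k be a field with algebraic closure k̄, and let F ∈ k[x,y] be a squarefree polynomial of total degree 2 whose homogeneous part F₂ of degree 2 is not of the form c·L² for any c ∈ k̄ and linear form L ∈ k̄[x,y] (equivalently, the projective closure of the conic Γ = V(F) meets the line at infinity of P² in two distinct points of P²(k̄)). Then every k-algebra automorphism φ of k[x,y] with φ(F) = cF for some c ∈ k* is affine, i.e. both φ(x) and φ(y) have total degree at most 1. -/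
/-!
Over `k̄` the quadratic part of `F` is a product `ℓ * m` of two independent linear forms. Extend
`φ` to an automorphism `Φ` of `k̄[x,y]` and put `P = Φ ℓ`, `M = Φ m`; both are nonconstant since
`Φ` is injective and fixes constants. As `x` and `y` are combinations of `ℓ` and `m`, the degrees of
`φ x` and `φ y` are at most `d = max (deg P) (deg M)`, and so is the degree of the image of the
part of `F` of degree `≤ 1`. Hence `Φ F = P * M + (terms of degree ≤ d)` has degree
`deg P + deg M ≥ d + 1`, while `Φ F = c F` has degree `2`; so `d ≤ 1`.
-/

open MvPolynomial

namespace MvPolynomial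

section Degree

variable {R S σ τ : Type*} [CommSemiring R]

theorem totalDegree_aeval_le_mul [CommSemiring S] [Algebra R S] (g : σ → MvPolynomial τ S)
    {d : ℕ} (hg : ∀ i, (g i).totalDegree ≤ d) (p : MvPolynomial σ R) :
    (aeval g p).totalDegree ≤ p.totalDegree * d := by
  conv_lhs => rw [p.as_sum, map_sum]
  refine (totalDegree_finsetSum _ _).trans (Finset.sup_le fun μ hμ => ?_)
  rw [aeval_monomial]
  calc _ ≤ (μ.prod fun i k => g i ^ k).totalDegree := by
        refine (totalDegree_mul _ _).trans ?_
        rw [algebraMap_apply, totalDegree_C, zero_add]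
    _ ≤ ∑ i ∈ μ.support, μ i * d :=
        (totalDegree_finsetProd _ _).trans <| Finset.sum_le_sum fun i _ =>
          (totalDegree_pow _ _).trans (Nat.mul_le_mul_left _ (hg i))
    _ = (μ.sum fun _ e => e) * d := by rw [Finsupp.sum, Finset.sum_mul]
    _ ≤ p.totalDegree * d := Nat.mul_le_mul_right _ (le_totalDegree hμ)

theorem totalDegree_map_of_injective [CommSemiring S] {f : R →+* S} (hf : Function.Injective f)
    (p : MvPolynomial σ R) : (map f p).totalDegree = p.totalDegree := by
  simp only [totalDegree, support_map_of_injective _ hf]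

theorem homogeneousComponent_map [CommSemiring S] (f : R →+* S) (n : ℕ) (p : MvPolynomial σ R) :
    homogeneousComponent n (map f p) = map f (homogeneousComponent n p) := by
  ext μ
  simp only [coeff_homogeneousComponent, coeff_map]
  split_ifs <;> simp

theorem totalDegree_C_mul_add_C_mul_le (a b : R) (p q : MvPolynomial σ R) :
    (C a * p + C b * q).totalDegree ≤ max p.totalDegree q.totalDegree := by
  refine (totalDegree_add _ _).trans (max_le_max ?_ ?_) <;>
    exact (totalDegree_mul _ _).trans (by rw [totalDegree_C, zero_add])

theorem one_le_totalDegree_of_injective {Φ : MvPolynomial σ R →ₐ[R] MvPolynomial τ R}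
    (hΦ : Function.Injective Φ) {p : MvPolynomial σ R} (hp : 1 ≤ p.totalDegree) :
    1 ≤ (Φ p).totalDegree := by
  by_contra h
  have hc : Φ p = C (coeff 0 (Φ p)) := totalDegree_eq_zero_iff_eq_C.1 (by omega)
  have hpc : p = C (coeff 0 (Φ p)) := hΦ (by rw [algHom_C]; exact hc)
  rw [hpc, totalDegree_C] at hp
  omega

end Degree

theorem totalDegree_sub_homogeneousComponent_le {R σ : Type*} [CommRing R]
    {p : MvPolynomial σ R} {n : ℕ} (hp : p.totalDegree ≤ n + 1) :
    (p - homogeneousComponent (n + 1) p).totalDegree ≤ n := by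
  refine Finset.sup_le fun μ hμ => ?_
  rw [mem_support_iff, coeff_sub, coeff_homogeneousComponent] at hμ
  have hμp : μ ∈ p.support := mem_support_iff.2 fun h => hμ (by simp [h])
  have hle : μ.degree ≤ n + 1 := (le_totalDegree hμp).trans hp
  split_ifs at hμ with hdeg
  · simp at hμ
  · change μ.degree ≤ n
    omega

theorem max_totalDegree_le_of_det_ne_zero {K σ : Type*} [Field K] {a b c d : K}
    (hdet : a * d - b * c ≠ 0) (p q : MvPolynomial σ K) :
    max p.totalDegree q.totalDegree ≤
      max (C a * p + C b * q).totalDegree (C c * p + C d * q).totalDegree := by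
  set δ := a * d - b * c with hδ
  have hp : p = C (d / δ) * (C a * p + C b * q) + C (-b / δ) * (C c * p + C d * q) := by
    have h1 : d / δ * a + -b / δ * c = 1 := by field_simp; linear_combination -hδ
    calc p = C (d / δ * a + -b / δ * c) * p + C (d / δ * b + -b / δ * d) * q := by
          rw [h1, show d / δ * b + -b / δ * d = 0 by ring, C_1, C_0]; ring
      _ = _ := by simp only [map_add, map_mul]; ring
  have hq : q = C (-c / δ) * (C a * p + C b * q) + C (a / δ) * (C c * p + C d * q) := by
    have h1 : -c / δ * b + a / δ * d = 1 := by field_simp; linear_combination -hδ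
    calc q = C (-c / δ * a + a / δ * c) * p + C (-c / δ * b + a / δ * d) * q := by
          rw [h1, show -c / δ * a + a / δ * c = 0 by ring, C_1, C_0]; ring
      _ = _ := by simp only [map_add, map_mul]; ring
  exact max_le ((congrArg totalDegree hp).trans_le (totalDegree_C_mul_add_C_mul_le _ _ _ _))
    ((congrArg totalDegree hq).trans_le (totalDegree_C_mul_add_C_mul_le _ _ _ _))

theorem IsHomogeneous.exists_eq_binary_quadratic {R : Type*} [CommSemiring R]
    {Q : MvPolynomial (Fin 2) R} (hQ : Q.IsHomogeneous 2) :
    ∃ a b c : R, Q = C a * X 0 ^ 2 + C b * (X 0 * X 1) + C c * X 1 ^ 2 := by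
  refine ⟨coeff (Finsupp.single 0 2) Q, coeff (Finsupp.single 0 1 + Finsupp.single 1 1) Q,
    coeff (Finsupp.single 1 2) Q, ?_⟩
  simp only [X, monomial_pow, monomial_mul, C_mul_monomial, mul_one, one_pow]
  ext μ
  obtain ⟨i, j, rfl⟩ : ∃ i j, μ = Finsupp.single 0 i + Finsupp.single 1 j :=
    ⟨μ 0, μ 1, by ext m; fin_cases m <;> simp⟩
  by_cases hij : i + j = 2
  · obtain ⟨rfl, rfl⟩ | ⟨rfl, rfl⟩ | ⟨rfl, rfl⟩ :
        (i = 0 ∧ j = 2) ∨ (i = 1 ∧ j = 1) ∨ (i = 2 ∧ j = 0) := by omega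
    all_goals simp [coeff_monomial, Finsupp.ext_iff, Fin.forall_fin_two]
  · have h0 : coeff (Finsupp.single 0 i + Finsupp.single 1 j) Q = 0 :=
      hQ.coeff_eq_zero (by simpa [Finsupp.degree_single] using hij)
    simp only [h0, Finsupp.smul_single, smul_eq_mul, mul_one, coeff_add, coeff_monomial, Finsupp.ext_iff, Finsupp.coe_add, Pi.add_apply,
      Fin.forall_fin_two, Finsupp.single_eq_same, Finsupp.single_eq_of_ne, ne_eq, zero_ne_one,
      one_ne_zero, not_false_eq_true, add_zero, zero_add]
    split_ifs <;> first | (exfalso; omega) | simp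

theorem IsHomogeneous.exists_eq_mul_of_ne_sq {K : Type*} [Field K] [IsAlgClosed K]
    {Q : MvPolynomial (Fin 2) K} (hQ : Q.IsHomogeneous 2)
    (hsq : ¬ ∃ e l₀ l₁ : K, Q = C e * (C l₀ * X 0 + C l₁ * X 1) ^ 2) :
    ∃ l₀ l₁ m₀ m₁ : K, l₀ * m₁ ≠ l₁ * m₀ ∧
      Q = (C l₀ * X 0 + C l₁ * X 1) * (C m₀ * X 0 + C m₁ * X 1) := by
  obtain ⟨a, b, c, rfl⟩ := hQ.exists_eq_binary_quadratic
  by_cases ha : a = 0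
  · subst ha
    refine ⟨0, 1, b, c, fun hb => hsq ⟨c, 0, 1, ?_⟩, by simp only [C_0, C_1]; ring⟩
    obtain rfl : b = 0 := by linear_combination -hb
    simp only [C_0, C_1]; ring
  obtain ⟨z, hz⟩ : ∃ z, a * z ^ 2 + b * z + c = 0 := by
    obtain ⟨z, hz⟩ := IsAlgClosed.exists_root
      (Polynomial.C a * Polynomial.X ^ 2 + Polynomial.C b * Polynomial.X + Polynomial.C c)
      (by rw [Polynomial.degree_quadratic ha]; decide)
    exact ⟨z, by simpa using hz⟩
  obtain rfl : c = -(a * z ^ 2) - b * z := by linear_combination hz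
  refine ⟨1, -z, a, b + a * z, fun hdet => hsq ⟨a, 1, -z, ?_⟩, ?_⟩
  · obtain rfl : b = -(2 * a * z) := by linear_combination hdet
    simp only [map_sub, map_neg, map_mul, map_pow, map_ofNat, C_1]; ring
  · simp only [map_sub, map_neg, map_mul, map_add, map_pow, C_1]; ring

section BaseChange

variable {k : Type*} (K : Type*) [CommSemiring k] [CommSemiring K] [Algebra k K] {σ τ : Type*}

noncomputable def baseChange (φ : MvPolynomial σ k →ₐ[k] MvPolynomial τ k) :
    MvPolynomial σ K →ₐ[K] MvPolynomial τ K :=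
  aeval fun i => map (algebraMap k K) (φ (X i))

@[simp]
theorem baseChange_X (φ : MvPolynomial σ k →ₐ[k] MvPolynomial τ k) (i : σ) :
    baseChange K φ (X i) = map (algebraMap k K) (φ (X i)) :=
  aeval_X _ i

@[simp]
theorem baseChange_map (φ : MvPolynomial σ k →ₐ[k] MvPolynomial τ k) (p : MvPolynomial σ k) :
    baseChange K φ (map (algebraMap k K) p) = map (algebraMap k K) (φ p) := by
  rw [baseChange, aeval_map_algebraMap]
  exact AlgHom.congr_fun (φ₁ := aeval _) (φ₂ := (mapAlgHom (Algebra.ofId k K)).comp φ)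
    (algHom_ext fun i => by simp) p

theorem baseChange_comp {υ : Type*} (φ : MvPolynomial σ k →ₐ[k] MvPolynomial τ k)
    (ψ : MvPolynomial τ k →ₐ[k] MvPolynomial υ k) :
    (baseChange K ψ).comp (baseChange K φ) = baseChange K (ψ.comp φ) :=
  algHom_ext fun i => by simp

theorem baseChange_injective (φ : MvPolynomial σ k ≃ₐ[k] MvPolynomial τ k) :
    Function.Injective (baseChange K φ.toAlgHom) := by
  have hid : (baseChange K φ.symm.toAlgHom).comp (baseChange K φ.toAlgHom) = AlgHom.id K _ := by
    rw [baseChange_comp]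
    exact algHom_ext fun i => by simp
  exact Function.LeftInverse.injective (g := baseChange K φ.symm.toAlgHom) (AlgHom.congr_fun hid)

end BaseChange

theorem one_le_totalDegree_C_mul_X_add_C_mul_X {R : Type*} [CommSemiring R] {l₀ l₁ : R}
    (h : l₀ ≠ 0 ∨ l₁ ≠ 0) :
    1 ≤ (C l₀ * X 0 + C l₁ * X 1 : MvPolynomial (Fin 2) R).totalDegree := by
  rcases h with h | h
  · exact (le_totalDegree (s := Finsupp.single 0 1)
      (by simp [coeff_X, Finsupp.single_eq_single_iff, h])).trans_eq' (by simp)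
  · exact (le_totalDegree (s := Finsupp.single 1 1)
      (by simp [coeff_X, Finsupp.single_eq_single_iff, h])).trans_eq' (by simp)

theorem max_totalDegree_lt_totalDegree_of_homogeneousComponent_two_eq_mul
    {K σ : Type*} [Field K] {Φ : MvPolynomial (Fin 2) K →ₐ[K] MvPolynomial σ K}
    (hΦ : Function.Injective Φ) {G : MvPolynomial (Fin 2) K} (hG : G.totalDegree ≤ 2)
    {l₀ l₁ m₀ m₁ : K} (hlm : l₀ * m₁ ≠ l₁ * m₀)
    (hG₂ : homogeneousComponent 2 G = (C l₀ * X 0 + C l₁ * X 1) * (C m₀ * X 0 + C m₁ * X 1)) :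
    max (Φ (X 0)).totalDegree (Φ (X 1)).totalDegree < (Φ G).totalDegree := by
  have hlin (a b : K) : Φ (C a * X 0 + C b * X 1) = C a * Φ (X 0) + C b * Φ (X 1) := by
    simp [algHom_C]
  have hP := one_le_totalDegree_of_injective hΦ
    (one_le_totalDegree_C_mul_X_add_C_mul_X (l₀ := l₀) (l₁ := l₁) (by grind))
  have hM := one_le_totalDegree_of_injective hΦ
    (one_le_totalDegree_C_mul_X_add_C_mul_X (l₀ := m₀) (l₁ := m₁) (by grind))
  rw [hlin] at hP hM
  have hspan := max_totalDegree_le_of_det_ne_zero (sub_ne_zero.2 hlm) (Φ (X 0)) (Φ (X 1))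
  have hrest : (Φ (G - homogeneousComponent 2 G)).totalDegree ≤
      1 * max (Φ (X 0)).totalDegree (Φ (X 1)).totalDegree := by
    have := totalDegree_aeval_le_mul (Φ ∘ X) (d := max (Φ (X 0)).totalDegree (Φ (X 1)).totalDegree)
      (fun i => by fin_cases i <;> simp) (G - homogeneousComponent 2 G)
    rw [← aeval_unique] at this
    exact this.trans (Nat.mul_le_mul_right _ (totalDegree_sub_homogeneousComponent_le hG))
  set P := C l₀ * Φ (X 0) + C l₁ * Φ (X 1)
  set M := C m₀ * Φ (X 0) + C m₁ * Φ (X 1)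
  have hPM : (P * M).totalDegree = P.totalDegree + M.totalDegree :=
    totalDegree_mul_of_isDomain (by rintro h; simp [h] at hP) (by rintro h; simp [h] at hM)
  have hΦG : Φ G = P * M + Φ (G - homogeneousComponent 2 G) := by
    rw [map_sub, hG₂, map_mul, hlin, hlin]; ring
  rw [hΦG, totalDegree_add_eq_left_of_totalDegree_lt (by omega), hPM]
  omega

end MvPolynomial

theorem aut_of_conic_is_affine_general {k : Type*} [Field k] (F : MvPolynomial (Fin 2) k)
    (hdeg : F.totalDegree = 2)
    (h2 : ¬ ∃ (c l₀ l₁ : AlgebraicClosure k),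
      MvPolynomial.map (algebraMap k (AlgebraicClosure k)) (homogeneousComponent 2 F)
        = C c * (C l₀ * X 0 + C l₁ * X 1) ^ 2)
    (φ : MvPolynomial (Fin 2) k ≃ₐ[k] MvPolynomial (Fin 2) k) (c : kˣ)
    (h : φ F = C (c : k) * F) :
    (φ (X 0)).totalDegree ≤ 1 ∧ (φ (X 1)).totalDegree ≤ 1 := by
  set K := AlgebraicClosure k
  have hinj := (algebraMap k K).injective
  obtain ⟨l₀, l₁, m₀, m₁, hlm, hG₂⟩ :=
    (homogeneousComponent_isHomogeneous 2 (map (algebraMap k K) F)).exists_eq_mul_of_ne_sq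
      (by rwa [homogeneousComponent_map])
  have key := max_totalDegree_lt_totalDegree_of_homogeneousComponent_two_eq_mul
    (baseChange_injective K φ) (by rw [totalDegree_map_of_injective hinj, hdeg]) hlm hG₂
  have hΦG : (baseChange K φ.toAlgHom (map (algebraMap k K) F)).totalDegree ≤ 2 := by
    rw [baseChange_map, AlgEquiv.coe_toAlgHom, h, map_mul, map_C]
    exact (totalDegree_mul _ _).trans (by rw [totalDegree_C, totalDegree_map_of_injective hinj, hdeg])
  simp only [baseChange_X, AlgEquiv.coe_toAlgHom, totalDegree_map_of_injective hinj] at key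
  omega

/-- every automorphism of `𝔸²` preserving a squarefree conic whose
projective closure meets the line at infinity in two distinct points (i.e. whose degree-2
homogeneous part is not a multiple of the square of a linear form over `k̄`) is affine. -/
theorem aut_of_conic_is_affine {k : Type*} [Field k] (F : MvPolynomial (Fin 2) k)
    (hsf : Squarefree F) (hdeg : F.totalDegree = 2)
    (h2 : ¬ ∃ (c l₀ l₁ : AlgebraicClosure k),
      MvPolynomial.map (algebraMap k (AlgebraicClosure k)) (homogeneousComponent 2 F)
        = C c * (C l₀ * X 0 + C l₁ * X 1) ^ 2)
    (φ : MvPolynomial (Fin 2) k ≃ₐ[k] MvPolynomial (Fin 2) k) (c : kˣ)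
    (h : φ F = C (c : k) * F) :
    (φ (X 0)).totalDegree ≤ 1 ∧ (φ (X 1)).totalDegree ≤ 1 :=
  aut_of_conic_is_affine_general F hdeg h2 φ c h
end

section
/- Let k be a perfect field, let a, b ≥ 1 be coprime integers with (a,b) ≠ (1,1), and let λ ∈ k*. Set F = x^b·y^a − λ ∈ k[x,y]. Then a k-algebra automorphism φ of k[x,y] satisfies φ(F) = cF for some c ∈ k* if and only if there exists t ∈ k* with φ(x) = t^a·x and φ(y) = t^{−b}·y. Thus Aut(A², V(F)) is the group k* acting diagonally via (x,y) ↦ (t^a x, t^{−b} y). -/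
open MvPolynomial


namespace AutCurveAux

variable {k : Type*} [Field k]

/-- Units of a multivariate polynomial ring over a field are constants. -/
lemma isUnit_eq_C : ∀ (n : ℕ) (f : MvPolynomial (Fin n) k), IsUnit f → ∃ α : k, f = C α := by
  intro n
  induction n with
  | zero => intro f _; obtain ⟨α, rfl⟩ := C_surjective (Fin 0) f; exact ⟨α, rfl⟩
  | succ n ih =>
    intro f hf
    have h1 : IsUnit ((finSuccEquiv k n) f) := hf.map (finSuccEquiv k n)
    obtain ⟨r, hr, hCr⟩ := Polynomial.isUnit_iff.mp h1
    obtain ⟨α, rfl⟩ := ih r hr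
    refine ⟨α, ?_⟩
    have h2 : (Polynomial.C (MvPolynomial.C α : MvPolynomial (Fin n) k))
        = algebraMap k (Polynomial (MvPolynomial (Fin n) k)) α := by
      rw [Polynomial.algebraMap_apply, MvPolynomial.algebraMap_eq]
    have h3 : f = (finSuccEquiv k n).symm (Polynomial.C (MvPolynomial.C α)) := by
      rw [hCr, AlgEquiv.symm_apply_apply]
    rw [h3, h2, AlgEquiv.commutes, MvPolynomial.algebraMap_eq]

lemma isUnit_eq_C₂ {f : MvPolynomial (Fin 2) k} (hf : IsUnit f) :
    ∃ α : k, α ≠ 0 ∧ f = C α := by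
  obtain ⟨α, rfl⟩ := isUnit_eq_C 2 f hf
  refine ⟨α, fun h => ?_, rfl⟩
  rw [h, map_zero] at hf
  exact hf.ne_zero rfl

/-- Substitute `0` for `X i`. -/
noncomputable def psi (i : Fin 2) : MvPolynomial (Fin 2) k →ₐ[k] MvPolynomial (Fin 2) k :=
  aeval (fun j => if j = i then 0 else X j)

lemma psi_X_self (i : Fin 2) : psi (k := k) i (X i) = 0 := by simp [psi]

lemma X_dvd_sub_psi (i : Fin 2) (f : MvPolynomial (Fin 2) k) : X i ∣ f - psi i f := by
  induction f using MvPolynomial.induction_on with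
  | C a => simp [psi]
  | add f g hf hg =>
    rw [map_add, add_sub_add_comm]
    exact dvd_add hf hg
  | mul_X f j hf =>
    rw [map_mul]
    by_cases hj : j = i
    · subst hj
      rw [psi_X_self, mul_zero, sub_zero]
      exact Dvd.intro_left f rfl
    · have : psi (k := k) i (X j) = X j := by simp [psi, hj]
      rw [this, ← sub_mul]
      exact Dvd.dvd.mul_right hf _

lemma X_dvd_iff (i : Fin 2) (f : MvPolynomial (Fin 2) k) : X i ∣ f ↔ psi i f = 0 := by
  constructor
  · rintro ⟨g, rfl⟩
    rw [map_mul, psi_X_self, zero_mul]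
  · intro h
    have h2 := X_dvd_sub_psi i f
    rwa [h, sub_zero] at h2

lemma prime_X (i : Fin 2) : Prime (X i : MvPolynomial (Fin 2) k) := by
  refine ⟨X_ne_zero i, fun h => ?_, fun f g hfg => ?_⟩
  · have h1 : (X i : MvPolynomial (Fin 2) k) ∣ 1 := h.dvd
    rw [X_dvd_iff, map_one] at h1
    exact one_ne_zero h1
  · rw [X_dvd_iff, map_mul, mul_eq_zero] at hfg
    rcases hfg with h | h
    · exact Or.inl ((X_dvd_iff i f).mpr h)
    · exact Or.inr ((X_dvd_iff i g).mpr h)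

lemma pderiv_X_pow_self (u : Fin 2) (m : ℕ) :
    pderiv u ((X u : MvPolynomial (Fin 2) k) ^ m) = C (m : k) * X u ^ (m - 1) := by
  rw [X_pow_eq_monomial, pderiv_monomial]
  rw [← Finsupp.single_tsub, C_mul_X_pow_eq_monomial]
  simp

lemma pderiv_X_pow_ne {u v : Fin 2} (h : v ≠ u) (n : ℕ) :
    pderiv u ((X v : MvPolynomial (Fin 2) k) ^ n) = 0 := by
  rw [X_pow_eq_monomial, pderiv_monomial]
  simp [Finsupp.single_apply, (fun hh => h hh : ¬ v = u)]

lemma dvd_pderiv_of_sq_dvd {p f : MvPolynomial (Fin 2) k} (u : Fin 2) (h : p ^ 2 ∣ f) :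
    p ∣ pderiv u f := by
  obtain ⟨g, rfl⟩ := h
  refine ⟨pderiv u p * g + pderiv u p * g + p * pderiv u g, ?_⟩
  rw [sq, pderiv_mul (f := p * p), pderiv_mul (f := p)]
  ring

lemma no_sq_dvd {u v : Fin 2} (huv : u ≠ v) {m n : ℕ} {c d : k}
    (hc : c ≠ 0) (hd : d ≠ 0) (hm : (m : k) ≠ 0) {p : MvPolynomial (Fin 2) k}
    (hp : Prime p) (hdvd : p ^ 2 ∣ C c * X u ^ m * X v ^ n + C d) : False := by
  set F : MvPolynomial (Fin 2) k := C c * X u ^ m * X v ^ n + C d with hF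
  have hvu : v ≠ u := fun h => huv h.symm
  have hm1 : 1 ≤ m := by
    rcases Nat.eq_zero_or_pos m with h | h
    · exfalso; apply hm; rw [h]; simp
    · exact h
  have hpF : p ∣ F := (dvd_pow_self p (two_ne_zero)).trans hdvd
  have hpd : p ∣ pderiv u F := dvd_pderiv_of_sq_dvd u hdvd
  have hcomp : pderiv u F = C (c * (m : k)) * (X u ^ (m - 1) * X v ^ n) := by
    rw [hF, map_add, pderiv_C, add_zero, pderiv_mul, pderiv_X_pow_ne hvu, mul_zero, add_zero,
      pderiv_mul, pderiv_C, zero_mul, zero_add, pderiv_X_pow_self]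
    rw [map_mul]
    ring
  have hcm : c * (m : k) ≠ 0 := mul_ne_zero hc hm
  have hpd2 : p ∣ X u ^ (m - 1) * X v ^ n := by
    have h1 : X u ^ (m - 1) * X v ^ n = C (c * (m : k))⁻¹ * pderiv u F := by
      rw [hcomp, ← mul_assoc, ← map_mul, inv_mul_cancel₀ hcm, map_one, one_mul]
    rw [h1]
    exact Dvd.dvd.mul_left hpd _
  have hX : p ∣ X u ∨ p ∣ X v := by
    rcases hp.2.2 _ _ hpd2 with h | h
    · exact Or.inl (hp.dvd_of_dvd_pow h)
    · exact Or.inr (hp.dvd_of_dvd_pow h)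
  have hXF : ∃ w : Fin 2, (X w : MvPolynomial (Fin 2) k) ∣ F := by
    rcases hX with h | h
    · exact ⟨u, ((hp.irreducible.associated_of_dvd (prime_X u).irreducible h).symm.dvd).trans hpF⟩
    · exact ⟨v, ((hp.irreducible.associated_of_dvd (prime_X v).irreducible h).symm.dvd).trans hpF⟩
  obtain ⟨w, hw⟩ := hXF
  obtain ⟨g, hg⟩ := hw
  have h0 : constantCoeff F = d := by
    rw [hF]
    simp only [map_add, map_mul, map_pow, constantCoeff_C, constantCoeff_X]
    rw [zero_pow (by omega : m ≠ 0)]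
    ring
  rw [hg] at h0
  simp only [map_mul, constantCoeff_X, zero_mul] at h0
  exact hd h0.symm

lemma dvd_monomial {b a : ℕ} (P : MvPolynomial (Fin 2) k)
    (h : P ∣ X 0 ^ b * X 1 ^ a) :
    ∃ (α : k) (i j : ℕ), α ≠ 0 ∧ P = C α * X 0 ^ i * X 1 ^ j := by
  revert h
  induction P using UniqueFactorizationMonoid.induction_on_prime with
  | h₁ =>
    intro h
    exfalso
    have := eq_zero_of_zero_dvd h
    exact (mul_ne_zero (pow_ne_zero _ (X_ne_zero 0)) (pow_ne_zero _ (X_ne_zero 1))) this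
  | h₂ P hP =>
    intro _
    obtain ⟨α, hα, rfl⟩ := isUnit_eq_C₂ hP
    exact ⟨α, 0, 0, hα, by ring⟩
  | h₃ P p hP0 hp ih =>
    intro h
    have hpM : p ∣ X 0 ^ b * X 1 ^ a := (dvd_mul_right p P).trans h
    obtain ⟨α, i, j, hα, rfl⟩ := ih ((dvd_mul_left P p).trans h)
    have hX : p ∣ (X 0 : MvPolynomial (Fin 2) k) ∨ p ∣ X 1 := by
      rcases hp.2.2 _ _ hpM with h' | h'
      · exact Or.inl (hp.dvd_of_dvd_pow h')
      · exact Or.inr (hp.dvd_of_dvd_pow h')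
    have key : ∀ w : Fin 2, p ∣ X w → ∃ γ : k, γ ≠ 0 ∧ p = C γ * X w := by
      intro w hw
      obtain ⟨q, hq⟩ := (hp.irreducible.associated_of_dvd (prime_X w).irreducible hw)
      obtain ⟨γ, hγ, hq2⟩ := isUnit_eq_C₂ q.isUnit
      refine ⟨γ⁻¹, inv_ne_zero hγ, ?_⟩
      have : p * C γ = X w := by rw [← hq2]; exact hq
      calc p = p * C γ * C γ⁻¹ := by
              rw [mul_assoc, ← map_mul, mul_inv_cancel₀ hγ, map_one, mul_one]
        _ = C γ⁻¹ * X w := by rw [this]; ring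
    rcases hX with h' | h'
    · obtain ⟨γ, hγ, rfl⟩ := key 0 h'
      exact ⟨γ * α, i + 1, j, mul_ne_zero hγ hα, by rw [map_mul]; ring⟩
    · obtain ⟨γ, hγ, rfl⟩ := key 1 h'
      exact ⟨γ * α, i, j + 1, mul_ne_zero hγ hα, by rw [map_mul]; ring⟩

lemma monomial_eq_aux {γ : k} {i j b a : ℕ} (hγ : γ ≠ 0)
    (h : C γ * X 0 ^ i * X 1 ^ j = (X 0 ^ b * X 1 ^ a : MvPolynomial (Fin 2) k)) :
    γ = 1 ∧ i = b ∧ j = a := by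
  rw [C_apply, X_pow_eq_monomial, X_pow_eq_monomial, X_pow_eq_monomial, X_pow_eq_monomial,
    monomial_mul, monomial_mul, monomial_mul, monomial_eq_monomial_iff] at h
  rcases h with ⟨hs, hcoeff⟩ | ⟨_, habs⟩
  · have h0 := DFunLike.congr_fun hs (0 : Fin 2)
    have h1 := DFunLike.congr_fun hs (1 : Fin 2)
    simp [Finsupp.single_apply] at h0 h1
    refine ⟨by simpa using hcoeff, h0, h1⟩
  · exfalso; simpa using habs

end AutCurveAux

/-- over a perfect field, the automorphisms of `𝔸²` preserving the curve
`x^b y^a = λ` (with `a, b ≥ 1` coprime, `(a,b) ≠ (1,1)`) are exactly the diagonal torus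
`(x,y) ↦ (t^a x, t^{-b} y)`. -/
theorem aut_of_multiplicative_curve {k : Type*} [Field k] [PerfectField k]
    (a b : ℕ) (ha : 1 ≤ a) (hb : 1 ≤ b) (hab : Nat.Coprime a b)
    (hne : ¬ (a = 1 ∧ b = 1)) (lam : kˣ)
    (φ : MvPolynomial (Fin 2) k ≃ₐ[k] MvPolynomial (Fin 2) k) :
    (∃ c : kˣ, φ (X 0 ^ b * X 1 ^ a - C (lam : k))
        = C (c : k) * (X 0 ^ b * X 1 ^ a - C (lam : k))) ↔
      ∃ t : kˣ, φ (X 0) = C ((t : k) ^ a) * X 0 ∧ φ (X 1) = C (((t : k)⁻¹) ^ b) * X 1 := by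
  classical
  have hCφ : ∀ r : k, φ (C r) = C r := fun r => by
    rw [← MvPolynomial.algebraMap_eq]; exact φ.commutes r
  constructor
  · rintro ⟨c0, hc⟩
    set c : k := (c0 : k) with hcdef
    have hc0 : c ≠ 0 := c0.ne_zero
    set P : MvPolynomial (Fin 2) k := φ (X 0) with hP
    set Q : MvPolynomial (Fin 2) k := φ (X 1) with hQ
    have hφF : φ (X 0 ^ b * X 1 ^ a - C (lam : k)) = P ^ b * Q ^ a - C (lam : k) := by
      rw [map_sub, map_mul, map_pow, map_pow, hCφ]
    rw [hφF] at hc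
    have key : P ^ b * Q ^ a = C c * (X 0 ^ b * X 1 ^ a) + (1 - C c) * C (lam : k) := by
      linear_combination hc
    have hnotunit : ∀ i : Fin 2, ¬ IsUnit (φ (X i)) := by
      intro i hu
      obtain ⟨α, hα, hEq⟩ := AutCurveAux.isUnit_eq_C₂ hu
      have h2 : X i = (C α : MvPolynomial (Fin 2) k) :=
        φ.injective (hEq.trans (hCφ α).symm)
      have hdeg := congrArg totalDegree h2
      rw [totalDegree_X, totalDegree_C] at hdeg
      exact one_ne_zero hdeg
    have hne0 : ∀ i : Fin 2, φ (X i) ≠ 0 := by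
      intro i h
      exact X_ne_zero i (φ.injective (h.trans (map_zero φ).symm))
    have hc1 : c = 1 := by
      by_contra hc1
      have hd : (1 - c) * (lam : k) ≠ 0 :=
        mul_ne_zero (sub_ne_zero.mpr fun h => hc1 h.symm) lam.ne_zero
      have key2 : P ^ b * Q ^ a = C c * X 0 ^ b * X 1 ^ a + C ((1 - c) * (lam : k)) := by
        rw [key, map_mul, map_sub, map_one]; ring
      have hsq : ∃ p : MvPolynomial (Fin 2) k, Prime p ∧ p ^ 2 ∣ P ^ b * Q ^ a := by
        have h2 : 2 ≤ a ∨ 2 ≤ b := by omega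
        rcases h2 with h2 | h2
        · obtain ⟨q, hq, hqd⟩ := WfDvdMonoid.exists_irreducible_factor (hnotunit 1) (hne0 1)
          refine ⟨q, UniqueFactorizationMonoid.irreducible_iff_prime.mp hq, ?_⟩
          calc q ^ 2 ∣ Q ^ 2 := pow_dvd_pow_of_dvd hqd 2
            _ ∣ Q ^ a := pow_dvd_pow Q h2
            _ ∣ P ^ b * Q ^ a := dvd_mul_left _ _
        · obtain ⟨q, hq, hqd⟩ := WfDvdMonoid.exists_irreducible_factor (hnotunit 0) (hne0 0)
          refine ⟨q, UniqueFactorizationMonoid.irreducible_iff_prime.mp hq, ?_⟩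
          calc q ^ 2 ∣ P ^ 2 := pow_dvd_pow_of_dvd hqd 2
            _ ∣ P ^ b := pow_dvd_pow P h2
            _ ∣ P ^ b * Q ^ a := dvd_mul_right _ _
      obtain ⟨p, hp, hpd⟩ := hsq
      rw [key2] at hpd
      have hcast : (b : k) ≠ 0 ∨ (a : k) ≠ 0 := by
        by_contra hcc
        push_neg at hcc
        obtain ⟨hbk, hak⟩ := hcc
        haveI : CharP k (ringChar k) := ringChar.charP k
        have hdvda : ringChar k ∣ a := (CharP.cast_eq_zero_iff k (ringChar k) a).mp hak
        have hdvdb : ringChar k ∣ b := (CharP.cast_eq_zero_iff k (ringChar k) b).mp hbk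
        have hdd : ringChar k ∣ 1 := hab ▸ Nat.dvd_gcd hdvda hdvdb
        exact CharP.char_ne_one k (ringChar k) (Nat.dvd_one.mp hdd)
      rcases hcast with hk | hk
      · exact AutCurveAux.no_sq_dvd (u := 0) (v := 1) (by decide) hc0 hd hk hp hpd
      · refine AutCurveAux.no_sq_dvd (u := 1) (v := 0) (m := a) (n := b) (by decide) hc0 hd hk hp ?_
        have heq : C c * X 1 ^ a * X 0 ^ b + C ((1 - c) * (lam : k))
            = (C c * X 0 ^ b * X 1 ^ a + C ((1 - c) * (lam : k)) : MvPolynomial (Fin 2) k) := by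
          ring
        exact hpd.trans (dvd_of_eq heq.symm)
    rw [hc1] at key
    have keyM : P ^ b * Q ^ a = X 0 ^ b * X 1 ^ a := by
      rw [key, map_one]; ring
    obtain ⟨α, i, j, hα, hPe⟩ := AutCurveAux.dvd_monomial P
      (by rw [← keyM]; exact (dvd_pow_self P (by omega : b ≠ 0)).trans (dvd_mul_right _ _))
    obtain ⟨β, m, l, hβ, hQe⟩ := AutCurveAux.dvd_monomial Q
      (by rw [← keyM]; exact (dvd_pow_self Q (by omega : a ≠ 0)).trans (dvd_mul_left _ _))
    have hPc : ¬(i = 0 ∧ j = 0) := by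
      rintro ⟨rfl, rfl⟩
      refine hnotunit 0 ?_
      rw [← hP, hPe]
      simpa using (isUnit_iff_ne_zero.mpr hα).map (C : k →+* MvPolynomial (Fin 2) k)
    have hQc : ¬(m = 0 ∧ l = 0) := by
      rintro ⟨rfl, rfl⟩
      refine hnotunit 1 ?_
      rw [← hQ, hQe]
      simpa using (isUnit_iff_ne_zero.mpr hβ).map (C : k →+* MvPolynomial (Fin 2) k)
    have hLHS : (C α * X 0 ^ i * X 1 ^ j) ^ b * (C β * X 0 ^ m * X 1 ^ l) ^ a
        = (C (α ^ b * β ^ a) * X 0 ^ (i * b + m * a) * X 1 ^ (j * b + l * a)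
            : MvPolynomial (Fin 2) k) := by
      rw [map_mul, map_pow, map_pow, pow_add, pow_add]; ring
    have hmono : C (α ^ b * β ^ a) * X 0 ^ (i * b + m * a) * X 1 ^ (j * b + l * a)
        = (X 0 ^ b * X 1 ^ a : MvPolynomial (Fin 2) k) := by
      calc C (α ^ b * β ^ a) * X 0 ^ (i * b + m * a) * X 1 ^ (j * b + l * a)
          = (C α * X 0 ^ i * X 1 ^ j) ^ b * (C β * X 0 ^ m * X 1 ^ l) ^ a := hLHS.symm
        _ = P ^ b * Q ^ a := by rw [hPe, hQe]
        _ = X 0 ^ b * X 1 ^ a := keyM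
    obtain ⟨hγ1, he1, he2⟩ := AutCurveAux.monomial_eq_aux
      (mul_ne_zero (pow_ne_zero _ hα) (pow_ne_zero _ hβ)) hmono
    -- arithmetic on exponents
    have hib : i ≤ 1 := by
      by_contra h'
      push_neg at h'
      have h2 : 2 * b ≤ i * b := Nat.mul_le_mul_right b h'
      have h3 : i * b ≤ b := Nat.le.intro he1
      omega
    have hexp : i = 1 ∧ j = 0 ∧ m = 0 ∧ l = 1 := by
      interval_cases i
      · -- i = 0
        exfalso
        rw [zero_mul, zero_add] at he1
        have hadvd : a ∣ b := ⟨m, by rw [mul_comm]; exact he1.symm⟩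
        have ha1 : a = 1 := Nat.Coprime.eq_one_of_dvd hab hadvd
        have hj : 1 ≤ j := by
          rcases Nat.eq_zero_or_pos j with h' | h'
          · exact (hPc ⟨rfl, h'⟩).elim
          · exact h'
        rw [ha1, mul_one] at he2
        have h4 : 1 * 1 ≤ j * b := Nat.mul_le_mul hj hb
        have h5 : j * b ≤ 1 := Nat.le.intro he2
        have h6 : j * b = 1 := le_antisymm h5 (by omega)
        have hb1 : b = 1 := Nat.dvd_one.mp ⟨j, ((mul_comm j b) ▸ h6).symm⟩
        exact hne ⟨ha1, hb1⟩
      · -- i = 1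
        rw [one_mul] at he1
        have hma : m * a = 0 := by omega
        have hm0 : m = 0 := by
          rcases Nat.mul_eq_zero.mp hma with h' | h'
          · exact h'
          · omega
        have hl : 1 ≤ l := by
          rcases Nat.eq_zero_or_pos l with h' | h'
          · exact (hQc ⟨hm0, h'⟩).elim
          · exact h'
        have h4 : 1 * a ≤ l * a := Nat.mul_le_mul_right a hl
        have h5 : l * a ≤ a := by
          calc l * a ≤ j * b + l * a := Nat.le_add_left _ _
            _ = a := he2
        have hla : l * a = a := le_antisymm h5 (by rw [one_mul] at h4; exact h4)
        have hl1 : l = 1 := Nat.eq_of_mul_eq_mul_right (show 0 < a by omega)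
          (by rw [hla, one_mul])
        have hj0 : j = 0 := by
          rw [hl1, one_mul] at he2
          have : j * b = 0 := by omega
          rcases Nat.mul_eq_zero.mp this with h' | h'
          · exact h'
          · omega
        exact ⟨rfl, hj0, hm0, hl1⟩
    obtain ⟨rfl, rfl, rfl, rfl⟩ := hexp
    rw [pow_one, pow_zero, mul_one] at hPe
    rw [pow_zero, pow_one, mul_one] at hQe
    rw [mul_comm (C β) _, mul_comm _ (C β)] at hQe
    -- build the unit t
    set A : kˣ := Units.mk0 α hα with hA
    set B : kˣ := Units.mk0 β hβ with hB
    have hAB : A ^ b * B ^ a = 1 := by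
      ext
      push_cast [hA, hB]
      exact hγ1
    have hABz : A ^ (b : ℤ) * B ^ (a : ℤ) = 1 := by
      rw [zpow_natCast, zpow_natCast]; exact hAB
    have hg := Nat.gcd_eq_gcd_ab a b
    have hab' : Nat.gcd a b = 1 := hab
    rw [hab'] at hg
    set u : ℤ := Nat.gcdA a b with hu
    set v : ℤ := Nat.gcdB a b with hv
    have h1 : (a : ℤ) * u + (b : ℤ) * v = 1 := by push_cast at hg; linarith
    set t : kˣ := A ^ u * B ^ (-v) with ht
    have htA : t ^ (a : ℤ) = A := by
      have e1 : t ^ (a : ℤ) = A ^ (u * (a : ℤ)) * B ^ (-v * (a : ℤ)) := by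
        rw [ht, mul_zpow, ← zpow_mul, ← zpow_mul]
      have e2 : (A ^ (b : ℤ) * B ^ (a : ℤ)) ^ v = A ^ ((b : ℤ) * v) * B ^ ((a : ℤ) * v) := by
        rw [mul_zpow, ← zpow_mul, ← zpow_mul]
      calc t ^ (a : ℤ) = t ^ (a : ℤ) * (A ^ (b : ℤ) * B ^ (a : ℤ)) ^ v := by
            rw [hABz, one_zpow, mul_one]
        _ = A ^ (u * (a : ℤ) + (b : ℤ) * v) * B ^ (-v * (a : ℤ) + (a : ℤ) * v) := by
            rw [e1, e2, mul_mul_mul_comm, ← zpow_add, ← zpow_add]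
        _ = A := by
            rw [show u * (a : ℤ) + (b : ℤ) * v = 1 by linarith,
              show -v * (a : ℤ) + (a : ℤ) * v = 0 by ring, zpow_one, zpow_zero, mul_one]
    have htB : t ^ (-(b : ℤ)) = B := by
      have e1 : t ^ (-(b : ℤ)) = A ^ (u * -(b : ℤ)) * B ^ (-v * -(b : ℤ)) := by
        rw [ht, mul_zpow, ← zpow_mul, ← zpow_mul]
      have e2 : (A ^ (b : ℤ) * B ^ (a : ℤ)) ^ u = A ^ ((b : ℤ) * u) * B ^ ((a : ℤ) * u) := by
        rw [mul_zpow, ← zpow_mul, ← zpow_mul]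
      calc t ^ (-(b : ℤ)) = t ^ (-(b : ℤ)) * (A ^ (b : ℤ) * B ^ (a : ℤ)) ^ u := by
            rw [hABz, one_zpow, mul_one]
        _ = A ^ (u * -(b : ℤ) + (b : ℤ) * u) * B ^ (-v * -(b : ℤ) + (a : ℤ) * u) := by
            rw [e1, e2, mul_mul_mul_comm, ← zpow_add, ← zpow_add]
        _ = B := by
            rw [show u * -(b : ℤ) + (b : ℤ) * u = 0 by ring,
              show -v * -(b : ℤ) + (a : ℤ) * u = 1 by linarith, zpow_one, zpow_zero, one_mul]
    refine ⟨t, ?_, ?_⟩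
    · rw [hPe]
      congr 1
      have h2 : t ^ a = A := by rw [← zpow_natCast, htA]
      have h3 := congrArg Units.val h2
      rw [Units.val_pow_eq_pow_val] at h3
      rw [h3, hA, Units.val_mk0]
    · rw [hQe]
      congr 1
      have h2 : (t⁻¹) ^ b = B := by
        rw [← htB, zpow_neg, ← inv_zpow, zpow_natCast]
      have h3 := congrArg Units.val h2
      rw [Units.val_pow_eq_pow_val] at h3
      rw [← Units.val_inv_eq_inv_val, h3, hB, Units.val_mk0]
  · rintro ⟨t, h0, h1⟩
    refine ⟨1, ?_⟩
    have ht : ((t : k) ^ a) ^ b * (((t : k)⁻¹) ^ b) ^ a = 1 := by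
      rw [← pow_mul, ← pow_mul, Nat.mul_comm b a, ← mul_pow, mul_inv_cancel₀ t.ne_zero, one_pow]
    have hCC : (C (((t : k) ^ a) ^ b) * C ((((t : k))⁻¹ ^ b) ^ a) : MvPolynomial (Fin 2) k) = 1 := by
      rw [← map_mul, ht, map_one]
    rw [map_sub, map_mul, map_pow, map_pow, h0, h1, hCφ, mul_pow, mul_pow,
      ← map_pow, ← map_pow, Units.val_one, map_one, one_mul]
    linear_combination (X 0 ^ b * X 1 ^ a : MvPolynomial (Fin 2) k) * hCC
end

section
/- Let k be a perfect field and let λ ∈ k*. Set F = x·y − λ ∈ k[x,y]. Then a k-algebra automorphism φ of k[x,y] satisfies φ(F) = cF for some c ∈ k* if and only if there exists t ∈ k* such that either φ(x) = t·x and φ(y) = t^{−1}·y, or φ(x) = t·y and φ(y) = t^{−1}·x. Thus Aut(A², V(F)) is generated by the diagonal torus k* and the swap (x,y) ↦ (y,x), and is isomorphic to k* ⋊ ℤ/2ℤ. -/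
open MvPolynomial

private lemma fin2_cover : ∀ (i j r : Fin 2), i ≠ j → r = i ∨ r = j := by decide

private lemma degOf_mul_zero {k : Type*} [Field k] {p q : MvPolynomial (Fin 2) k}
    (hp : p ≠ 0) (hq : q ≠ 0) :
    degreeOf 0 (p * q) = degreeOf 0 p + degreeOf 0 q := by
  rw [← natDegree_finSuccEquiv, ← natDegree_finSuccEquiv, ← natDegree_finSuccEquiv, map_mul]
  exact Polynomial.natDegree_mul
    ((map_ne_zero_iff _ (finSuccEquiv k 1).injective).mpr hp)
    ((map_ne_zero_iff _ (finSuccEquiv k 1).injective).mpr hq)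

private lemma degOf_mul_one' {k : Type*} [Field k] {p q : MvPolynomial (Fin 2) k}
    (hp : p ≠ 0) (hq : q ≠ 0) :
    degreeOf 1 (p * q) = degreeOf 1 p + degreeOf 1 q := by
  have hs : Function.Injective (Equiv.swap (0 : Fin 2) 1) := (Equiv.swap 0 1).injective
  have key : ∀ r : MvPolynomial (Fin 2) k,
      degreeOf 1 r = degreeOf 0 (rename (Equiv.swap (0 : Fin 2) 1) r) := by
    intro r
    have := degreeOf_rename_of_injective (p := r) hs 1
    simpa [Equiv.swap_apply_right] using this.symm
  rw [key, key p, key q, map_mul]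
  exact degOf_mul_zero
    ((map_ne_zero_iff _ (rename_injective _ hs)).mpr hp)
    ((map_ne_zero_iff _ (rename_injective _ hs)).mpr hq)

private lemma eq_linear {k : Type*} [Field k] {i j : Fin 2} (hij : i ≠ j)
    {p : MvPolynomial (Fin 2) k} (h1 : degreeOf i p ≤ 1) (h0 : degreeOf j p = 0) :
    ∃ a e : k, p = C a * X i + C e := by
  refine ⟨coeff (Finsupp.single i 1) p, coeff 0 p, ?_⟩
  have hsupp : ∀ m ∈ p.support, m = 0 ∨ m = Finsupp.single i 1 := by
    intro m hm
    have hmi : m i ≤ 1 := le_trans (monomial_le_degreeOf i hm) h1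
    have hmj : m j = 0 :=
      Nat.le_antisymm (le_trans (monomial_le_degreeOf j hm) h0.le) (Nat.zero_le _)
    have hm' : m = Finsupp.single i (m i) := by
      ext r
      rcases fin2_cover i j r hij with rfl | rfl
      · simp [Finsupp.single_apply]
      · simp [Finsupp.single_apply, hij, hmj]
    rcases Nat.le_one_iff_eq_zero_or_eq_one.mp hmi with h | h
    · left; rw [hm', h, Finsupp.single_zero]
    · right; rw [hm', h]
  ext m
  by_cases h0m : m = 0
  · subst h0m
    simp [coeff_C, coeff_X', Finsupp.single_eq_zero]
  by_cases h1m : m = Finsupp.single i 1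
  · subst h1m
    rw [coeff_add, coeff_C_mul, coeff_X', if_pos rfl, coeff_C, if_neg (Ne.symm h0m)]
    ring
  · have : coeff m p = 0 := by
      by_contra hne
      rcases hsupp m (mem_support_iff.mpr hne) with h | h <;> tauto
    rw [this, coeff_add, coeff_C_mul, coeff_X', if_neg (fun h => h1m h.symm),
      coeff_C, if_neg (fun h => h0m h.symm)]
    ring

private lemma eq_C_of_deg0 {k : Type*} [Field k] {p : MvPolynomial (Fin 2) k}
    (h0 : degreeOf 0 p = 0) (h1 : degreeOf 1 p = 0) : ∃ e : k, p = C e := by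
  refine ⟨coeff 0 p, ?_⟩
  ext m
  by_cases h0m : m = 0
  · subst h0m; simp [coeff_C]
  · have : coeff m p = 0 := by
      by_contra hne
      have hm := mem_support_iff.mpr hne
      have hm0 : m 0 = 0 :=
        Nat.le_antisymm (le_trans (monomial_le_degreeOf 0 hm) h0.le) (Nat.zero_le _)
      have hm1 : m 1 = 0 :=
        Nat.le_antisymm (le_trans (monomial_le_degreeOf 1 hm) h1.le) (Nat.zero_le _)
      apply h0m
      ext r
      rcases fin2_cover 0 1 r (by decide) with rfl | rfl <;> simp [hm0, hm1]
    rw [this]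
    simp [coeff_C, Ne.symm h0m]

private lemma scalar_extract {k : Type*} [Field k] {a e b e' c d : k}
    (heq : (C a * X 0 + C e) * (C b * X 1 + C e')
      = (C c * (X 0 * X 1) + C d : MvPolynomial (Fin 2) k)) :
    a * e' = 0 ∧ e * b = 0 ∧ a * b = c ∧ e * e' = d := by
  have E1 := congrArg (aeval (R := k) (![Polynomial.X, 0] : Fin 2 → Polynomial k)) heq
  have E2 := congrArg (aeval (R := k) (![0, Polynomial.X] : Fin 2 → Polynomial k)) heq
  have E3 := congrArg (aeval (R := k) (![Polynomial.X, Polynomial.X] : Fin 2 → Polynomial k)) heq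
  simp only [map_add, map_mul, aeval_X, aeval_C, Matrix.cons_val_zero, Matrix.cons_val_one,
    Matrix.head_cons, Polynomial.algebraMap_eq] at E1 E2 E3
  refine ⟨?_, ?_, ?_, ?_⟩
  · have := congrArg (Polynomial.coeff · 1) E1
    simpa [mul_add, add_mul, Polynomial.coeff_add, Polynomial.coeff_C_mul, Polynomial.coeff_C,
      Polynomial.coeff_X] using this
  · have := congrArg (Polynomial.coeff · 1) E2
    simpa [mul_add, add_mul, Polynomial.coeff_add, Polynomial.coeff_C_mul, Polynomial.coeff_C,
      Polynomial.coeff_X] using this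
  · ring_nf at E3
    have := congrArg (Polynomial.coeff · 2) E3
    simpa [Polynomial.coeff_add, Polynomial.coeff_C_mul, Polynomial.coeff_C,
      Polynomial.coeff_X_pow, Polynomial.coeff_mul_X, Polynomial.coeff_X_mul,
      Polynomial.coeff_mul_C, Polynomial.coeff_X, mul_assoc] using this
  · have := congrArg (Polynomial.coeff · 0) E1
    simpa [mul_add, add_mul, Polynomial.coeff_add, Polynomial.coeff_C_mul, Polynomial.coeff_C,
      Polynomial.coeff_X] using this

private lemma phi_X_ne_C {k : Type*} [Field k]
    (φ : MvPolynomial (Fin 2) k ≃ₐ[k] MvPolynomial (Fin 2) k) (i : Fin 2) (r : k) :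
    φ (X i) ≠ C r := by
  intro h
  have hCr : φ.symm (C r) = C r := by rw [← algebraMap_eq]; exact φ.symm.commutes r
  have hX : (X i : MvPolynomial (Fin 2) k) = C r := by
    conv_lhs => rw [← φ.symm_apply_apply (X i), h, hCr]
  have h2 := congrArg (coeff (Finsupp.single i 1)) hX
  rw [coeff_X', if_pos rfl, coeff_C,
    if_neg (fun hh => (one_ne_zero (α := ℕ)) (Finsupp.single_eq_zero.mp hh.symm))] at h2
  exact one_ne_zero h2

/-- over a perfect field, the automorphisms of `𝔸²` preserving the hyperbola
`xy = λ` are exactly the diagonal torus together with its composition with the swap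
`(x,y) ↦ (y,x)`; the group is `k* ⋊ ℤ/2ℤ`. -/
theorem aut_of_hyperbola {k : Type*} [Field k] [PerfectField k] (lam : kˣ)
    (φ : MvPolynomial (Fin 2) k ≃ₐ[k] MvPolynomial (Fin 2) k) :
    (∃ c : kˣ, φ (X 0 * X 1 - C (lam : k)) = C (c : k) * (X 0 * X 1 - C (lam : k))) ↔
      ∃ t : kˣ, (φ (X 0) = C (t : k) * X 0 ∧ φ (X 1) = C ((t : k)⁻¹) * X 1) ∨
        (φ (X 0) = C (t : k) * X 1 ∧ φ (X 1) = C ((t : k)⁻¹) * X 0) := by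
  have hCl : φ (C ((lam : k))) = C ((lam : k)) := by
    rw [← algebraMap_eq]; exact φ.commutes _
  constructor
  · rintro ⟨c, hc⟩
    set P := φ (X 0) with hP
    set Q := φ (X 1) with hQ
    have hstep : P * Q - C (lam : k) = C (c : k) * (X 0 * X 1 - C (lam : k)) := by
      have h := hc
      rw [map_sub, map_mul, hCl] at h
      exact h
    have hd : P * Q = C (c : k) * (X 0 * X 1) + C ((lam : k) - (c : k) * (lam : k)) := by
      rw [C_sub, C_mul]
      linear_combination hstep
    have hP0 : P ≠ 0 := fun h => phi_X_ne_C φ 0 0 (by rw [← hP, h, C_0])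
    have hQ0 : Q ≠ 0 := fun h => phi_X_ne_C φ 1 0 (by rw [← hQ, h, C_0])
    have hbound : ∀ i : Fin 2,
        degreeOf i (C (c : k) * (X 0 * X 1) + C ((lam : k) - (c : k) * (lam : k))) ≤ 1 := by
      intro i
      refine le_trans (degreeOf_add_le _ _ _) (max_le ?_ ?_)
      · refine le_trans (degreeOf_mul_le _ _ _) ?_
        rw [degreeOf_C, zero_add]
        refine le_trans (degreeOf_mul_le _ _ _) ?_
        rw [degreeOf_X, degreeOf_X]
        split <;> split <;> omega
      · exact (degreeOf_C _ _).le.trans (Nat.zero_le 1)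
    have key0 : degreeOf 0 P + degreeOf 0 Q ≤ 1 := by
      rw [← degOf_mul_zero hP0 hQ0, hd]; exact hbound 0
    have key1 : degreeOf 1 P + degreeOf 1 Q ≤ 1 := by
      rw [← degOf_mul_one' hP0 hQ0, hd]; exact hbound 1
    have hPnc : ¬(degreeOf 0 P = 0 ∧ degreeOf 1 P = 0) := by
      rintro ⟨h0, h1⟩
      obtain ⟨r, hr⟩ := eq_C_of_deg0 h0 h1
      exact phi_X_ne_C φ 0 r (hP ▸ hr)
    have hQnc : ¬(degreeOf 0 Q = 0 ∧ degreeOf 1 Q = 0) := by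
      rintro ⟨h0, h1⟩
      obtain ⟨r, hr⟩ := eq_C_of_deg0 h0 h1
      exact phi_X_ne_C φ 1 r (hQ ▸ hr)
    have hcne : (c : k) ≠ 0 := c.ne_zero
    have hlne : (lam : k) ≠ 0 := lam.ne_zero
    by_cases h00 : degreeOf 0 P = 0
    · -- swap case
      have h1P : degreeOf 1 P ≠ 0 := fun h => hPnc ⟨h00, h⟩
      have h1Q : degreeOf 1 Q = 0 := by omega
      have h0Q : degreeOf 0 Q ≠ 0 := fun h => hQnc ⟨h, h1Q⟩
      obtain ⟨a, e, hPe⟩ := eq_linear (i := 1) (j := 0) (by decide) (by omega) h00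
      obtain ⟨b, e', hQe⟩ := eq_linear (i := 0) (j := 1) (by decide) (by omega) h1Q
      rw [hPe, hQe] at hd
      have hd' : (C b * X 0 + C e') * (C a * X 1 + C e)
          = (C (c : k) * (X 0 * X 1) + C ((lam : k) - (c : k) * (lam : k)) :
            MvPolynomial (Fin 2) k) := by
        rw [← hd]; ring
      obtain ⟨h1, h2, h3, h4⟩ := scalar_extract hd'
      -- h1 : b * e = 0, h2 : e' * a = 0, h3 : b * a = c, h4 : e' * e = lam - c lam
      have hane : a ≠ 0 := fun h => hcne (by rw [← h3, h, mul_zero])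
      have hbne : b ≠ 0 := fun h => hcne (by rw [← h3, h, zero_mul])
      have he : e = 0 := by
        rcases mul_eq_zero.mp h1 with h | h
        · exact absurd h hbne
        · exact h
      have he' : e' = 0 := by
        rcases mul_eq_zero.mp h2 with h | h
        · exact h
        · exact absurd h hane
      have hc1 : (c : k) = 1 := by
        have h5 : (lam : k) * (1 - (c : k)) = 0 := by
          rw [he, he'] at h4; linear_combination -h4
        rcases mul_eq_zero.mp h5 with h | h
        · exact absurd h hlne
        · exact (sub_eq_zero.mp h).symm
      have hab : a * b = 1 := by rw [mul_comm]; rw [hc1] at h3; exact h3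
      refine ⟨Units.mkOfMulEqOne a b hab, Or.inr ⟨?_, ?_⟩⟩
      · rw [hPe, he, C_0, add_zero]; rfl
      · rw [hQe, he', C_0, add_zero]
        have : (a : k)⁻¹ = b := inv_eq_of_mul_eq_one_right hab
        rw [show ((Units.mkOfMulEqOne a b hab : kˣ) : k) = a from rfl, this]
    · -- torus case
      have h0Q : degreeOf 0 Q = 0 := by omega
      have h1Q : degreeOf 1 Q ≠ 0 := fun h => hQnc ⟨h0Q, h⟩
      have h1P : degreeOf 1 P = 0 := by omega
      obtain ⟨a, e, hPe⟩ := eq_linear (i := 0) (j := 1) (by decide) (by omega) h1P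
      obtain ⟨b, e', hQe⟩ := eq_linear (i := 1) (j := 0) (by decide) (by omega) h0Q
      rw [hPe, hQe] at hd
      obtain ⟨h1, h2, h3, h4⟩ := scalar_extract hd
      -- h1 : a * e' = 0, h2 : e * b = 0, h3 : a * b = c, h4 : e * e' = lam - c lam
      have hane : a ≠ 0 := fun h => hcne (by rw [← h3, h, zero_mul])
      have hbne : b ≠ 0 := fun h => hcne (by rw [← h3, h, mul_zero])
      have he' : e' = 0 := by
        rcases mul_eq_zero.mp h1 with h | h
        · exact absurd h hane
        · exact h
      have he : e = 0 := by
        rcases mul_eq_zero.mp h2 with h | h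
        · exact h
        · exact absurd h hbne
      have hc1 : (c : k) = 1 := by
        have h5 : (lam : k) * (1 - (c : k)) = 0 := by
          rw [he, he'] at h4; linear_combination -h4
        rcases mul_eq_zero.mp h5 with h | h
        · exact absurd h hlne
        · exact (sub_eq_zero.mp h).symm
      have hab : a * b = 1 := by rw [hc1] at h3; exact h3
      refine ⟨Units.mkOfMulEqOne a b hab, Or.inl ⟨?_, ?_⟩⟩
      · rw [hPe, he, C_0, add_zero]; rfl
      · rw [hQe, he', C_0, add_zero]
        have : (a : k)⁻¹ = b := inv_eq_of_mul_eq_one_right hab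
        rw [show ((Units.mkOfMulEqOne a b hab : kˣ) : k) = a from rfl, this]
  · rintro ⟨t, h | h⟩ <;> refine ⟨1, ?_⟩ <;>
      rw [map_sub, map_mul, h.1, h.2, hCl, Units.val_one, C_1, one_mul]
    · rw [mul_mul_mul_comm, ← C_mul, mul_inv_cancel₀ t.ne_zero, C_1, one_mul]
    · rw [mul_mul_mul_comm, ← C_mul, mul_inv_cancel₀ t.ne_zero, C_1, one_mul, mul_comm (X 1)]
end

section
/- Let k be a perfect field of characteristic different from 2, and let λ, ν ∈ k* be such that −λν is not a square in k. Set F = λx² + νy² − 1 ∈ k[x,y]. Then a k-algebra automorphism φ of k[x,y] satisfies φ(F) = cF for some c ∈ k* if and only if φ is linear (φ(x) = αx + βy, φ(y) = γx + δy with αδ − βγ ≠ 0) and preserves the quadratic form, i.e. λ·φ(x)² + ν·φ(y)² = λx² + νy²; equivalently, Aut(A², V(F)) is the subgroup of GL(2,k) preserving the form λx² + νy², namely the set of matrices (a, −νb; λb, a) with a² + λνb² = 1 together with their compositions with σ = diag(1, −1). -/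
/-!
Write `P = φ x`, `Q = φ y`, so that `φ(F) = λP² + νQ² - 1`. If `φ(F) = cF`, then `λP² + νQ²` has
degree at most two. Since `-λν` is not a square, the leading coefficients of `λP²` and `νQ²` (for a
degree-compatible monomial order) cannot cancel, so `P` and `Q` are affine. Comparing the six
coefficients of `λP² + νQ² - 1 = cF` then shows that the linear part is invertible, the translation
part vanishes and `c = 1`, i.e. `φ` is a linear isometry of `λx² + νy²`.
-/

open MvPolynomial MonomialOrder

section Field

variable {k : Type*} [Field k]

lemma eq_zero_of_mul_sq_add_mul_sq_eq_zero {lam nu a b : k}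
    (hsq : ¬ ∃ s : k, s ^ 2 = -(lam * nu)) (h : lam * a ^ 2 + nu * b ^ 2 = 0) : a = 0 := by
  by_contra ha
  exact hsq ⟨nu * b / a, by field_simp; linear_combination nu * h⟩

lemma det_ne_zero_of_gram_eq {lam nu c α β γ δ : k} (hlam : lam ≠ 0) (hnu : nu ≠ 0) (hc : c ≠ 0)
    (h₁ : lam * α ^ 2 + nu * γ ^ 2 = c * lam) (h₂ : lam * α * β + nu * γ * δ = 0)
    (h₃ : lam * β ^ 2 + nu * δ ^ 2 = c * nu) : α * δ - β * γ ≠ 0 := by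
  -- the determinant of `Mᵀ diag(λ, ν) M = c • diag(λ, ν)`, with `M = !![α, β; γ, δ]`
  have hdet : (lam * nu) * (α * δ - β * γ) ^ 2 = (lam * nu) * c ^ 2 := by
    linear_combination (lam * β ^ 2 + nu * δ ^ 2) * h₁ + c * lam * h₃
      - (lam * α * β + nu * γ * δ) * h₂
  intro h0
  rw [h0] at hdet
  simp [hlam, hnu, hc] at hdet

lemma eq_zero_of_transpose_mul_eq_zero {lam nu α β γ δ e f : k} (hlam : lam ≠ 0) (hnu : nu ≠ 0)
    (hdet : α * δ - β * γ ≠ 0) (h₁ : lam * α * e + nu * γ * f = 0)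
    (h₂ : lam * β * e + nu * δ * f = 0) : e = 0 ∧ f = 0 := by
  have he : (lam * (α * δ - β * γ)) * e = 0 := by linear_combination δ * h₁ - γ * h₂
  have hf : (nu * (α * δ - β * γ)) * f = 0 := by linear_combination α * h₂ - β * h₁
  exact ⟨(mul_eq_zero.mp he).resolve_left (mul_ne_zero hlam hdet),
    (mul_eq_zero.mp hf).resolve_left (mul_ne_zero hnu hdet)⟩

end Field

lemma Finsupp.single_add_single_ne_single {σ : Type*} {i j : σ} (hij : i ≠ j) (a : σ) (n : ℕ) :
    Finsupp.single i 1 + Finsupp.single j 1 ≠ Finsupp.single a n := by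
  classical
  intro h
  have hi := DFunLike.congr_fun h i
  have hj := DFunLike.congr_fun h j
  rw [Finsupp.add_apply, Finsupp.single_apply, Finsupp.single_apply, Finsupp.single_apply] at hi hj
  grind

namespace MvPolynomial

variable {σ R : Type*}

section CommSemiring

variable [CommSemiring R]

lemma totalDegree_sq_of_isDomain [NoZeroDivisors R] (p : MvPolynomial σ R) :
    (p ^ 2).totalDegree = 2 * p.totalDegree := by
  rcases eq_or_ne p 0 with rfl | hp
  · simp
  · rw [sq, totalDegree_mul_of_isDomain hp hp, two_mul]

lemma totalDegree_C_mul_X_sq_add_C_mul_X_sq_add_C_le (i j : σ) (a b e : R) :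
    (C a * X i ^ 2 + C b * X j ^ 2 + C e : MvPolynomial σ R).totalDegree ≤ 2 := by
  rw [C_mul_X_pow_eq_monomial, C_mul_X_pow_eq_monomial]
  refine (totalDegree_add _ _).trans (max_le ((totalDegree_add _ _).trans (max_le ?_ ?_)) ?_)
  · exact (totalDegree_monomial_le _ _).trans (by simp)
  · exact (totalDegree_monomial_le _ _).trans (by simp)
  · simp

lemma eq_sum_C_mul_X_add_C_of_totalDegree_le_one [Fintype σ] [DecidableEq σ]
    {p : MvPolynomial σ R} (hp : p.totalDegree ≤ 1) :
    p = ∑ i, C (coeff (Finsupp.single i 1) p) * X i + C (coeff 0 p) := by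
  ext m
  simp only [coeff_add, coeff_sum, coeff_C_mul, coeff_X, coeff_C, mul_ite, mul_one, mul_zero]
  rcases Nat.lt_or_ge 1 m.degree with hm | hm
  · have hX : ∀ i, Finsupp.single i 1 ≠ m := fun i h ↦ by simp [← h] at hm
    have hC : 0 ≠ m := fun h ↦ by simp [← h] at hm
    simp [coeff_eq_zero_of_totalDegree_lt (hp.trans_lt hm), hX, hC]
  · rcases Nat.le_one_iff_eq_zero_or_eq_one.mp hm with h0 | h1
    · obtain rfl := (Finsupp.degree_eq_zero_iff m).mp h0
      simp
    · obtain ⟨a, rfl⟩ := (Finsupp.sum_eq_one_iff _).mp h1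
      simp [Finsupp.single_eq_single_iff, eq_comm (a := (0 : σ →₀ ℕ))]

lemma coeffs_eq_zero_of_quadratic_eq_zero {i j : σ} (hij : i ≠ j) {a b c d e f : R}
    (h : C a * X i ^ 2 + C b * (X i * X j) + C c * X j ^ 2 + C d * X i + C e * X j + C f = 0) :
    a = 0 ∧ b = 0 ∧ c = 0 ∧ d = 0 ∧ e = 0 ∧ f = 0 := by
  classical
  have hXX : (X i * X j : MvPolynomial σ R) =
      monomial (Finsupp.single i 1 + Finsupp.single j 1) 1 := by
    simp [X, monomial_mul]
  rw [hXX, X_pow_eq_monomial, X_pow_eq_monomial, X, X] at h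
  have hcoeff (m : σ →₀ ℕ) := congrArg (coeff m) h
  simp only [C_mul_monomial, coeff_add, coeff_monomial, coeff_C, coeff_zero, mul_one] at hcoeff
  have hne := Finsupp.single_add_single_ne_single hij
  have hne' (a : σ) (n : ℕ) := (hne a n).symm
  have hb : b = 0 := by
    have hb := hcoeff (Finsupp.single i 1 + Finsupp.single j 1)
    simp only [hne'] at hb
    rw [if_neg (Ne.symm (by simp))] at hb
    simpa using hb
  refine ⟨?_, hb, ?_, ?_, ?_, ?_⟩
  · simpa [Finsupp.single_eq_single_iff, hij, hij.symm, hne, hne', eq_comm (a := (0 : σ →₀ ℕ))]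
      using hcoeff (Finsupp.single i 2)
  · simpa [Finsupp.single_eq_single_iff, hij, hij.symm, hne, hne', eq_comm (a := (0 : σ →₀ ℕ))]
      using hcoeff (Finsupp.single j 2)
  · simpa [Finsupp.single_eq_single_iff, hij, hij.symm, hne, hne', eq_comm (a := (0 : σ →₀ ℕ))]
      using hcoeff (Finsupp.single i 1)
  · simpa [Finsupp.single_eq_single_iff, hij, hij.symm, hne, hne', eq_comm (a := (0 : σ →₀ ℕ))]
      using hcoeff (Finsupp.single j 1)
  · simpa [Finsupp.single_eq_single_iff, hij, hij.symm, hne, hne', eq_comm (a := (0 : σ →₀ ℕ))]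
      using hcoeff 0

end CommSemiring

lemma mul_sq_add_mul_sq_comp_linear_eq [CommRing R] {i j : σ} {lam nu α β γ δ : R}
    (h₁ : lam * α ^ 2 + nu * γ ^ 2 = lam) (h₂ : lam * α * β + nu * γ * δ = 0)
    (h₃ : lam * β ^ 2 + nu * δ ^ 2 = nu) :
    C lam * (C α * X i + C β * X j) ^ 2 + C nu * (C γ * X i + C δ * X j) ^ 2 =
      (C lam * X i ^ 2 + C nu * X j ^ 2 : MvPolynomial σ R) := by
  have hC {a b : R} (h : a = b) : (C a : MvPolynomial σ R) = C b := congrArg C h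
  have H₁ := hC h₁
  have H₂ := hC h₂
  have H₃ := hC h₃
  simp only [map_add, map_mul, map_pow, map_zero] at H₁ H₂ H₃
  linear_combination X i ^ 2 * H₁ + 2 * X i * X j * H₂ + X j ^ 2 * H₃

section Anisotropic

variable {k : Type*} [Field k] {lam nu : k}

lemma _root_.MonomialOrder.degree_sq_le_degree_mul_sq_add_mul_sq (m : MonomialOrder σ)
    (hsq : ¬ ∃ s : k, s ^ 2 = -(lam * nu)) {p q : MvPolynomial σ k} (hp : p ≠ 0)
    (hqp : m.degree (q ^ 2) ≼[m] m.degree (p ^ 2)) :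
    m.degree (p ^ 2) ≼[m] m.degree (C lam * p ^ 2 + C nu * q ^ 2) := by
  obtain ⟨t, ht⟩ : ∃ t : k, coeff (m.degree (p ^ 2)) (q ^ 2) = t ^ 2 := by
    rcases hqp.lt_or_eq with hlt | heq
    · exact ⟨0, by rw [m.coeff_eq_zero_of_lt hlt]; ring⟩
    · exact ⟨m.leadingCoeff q, by rw [← m.toSyn.injective heq, ← m.leadingCoeff_pow]; rfl⟩
  have hlc : coeff (m.degree (p ^ 2)) (p ^ 2) = m.leadingCoeff p ^ 2 := by
    rw [← m.leadingCoeff_pow]; rfl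
  apply m.le_degree
  rw [mem_support_iff, coeff_add, coeff_C_mul, coeff_C_mul, ht, hlc]
  exact fun h ↦ m.leadingCoeff_ne_zero_iff.mpr hp (eq_zero_of_mul_sq_add_mul_sq_eq_zero hsq h)

lemma two_mul_max_totalDegree_le_of_degLex_le [LinearOrder σ] [WellFoundedGT σ]
    (hsq : ¬ ∃ s : k, s ^ 2 = -(lam * nu)) {p q : MvPolynomial σ k}
    (hqp : degLex.degree (q ^ 2) ≼[degLex] degLex.degree (p ^ 2)) :
    2 * max p.totalDegree q.totalDegree ≤ (C lam * p ^ 2 + C nu * q ^ 2).totalDegree := by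
  rw [← max_mul_mul_left, ← totalDegree_sq_of_isDomain, ← totalDegree_sq_of_isDomain,
    max_eq_left (degLex_totalDegree_monotone hqp)]
  rcases eq_or_ne p 0 with rfl | hp
  · simp
  · exact degLex_totalDegree_monotone (degLex.degree_sq_le_degree_mul_sq_add_mul_sq hsq hp hqp)

lemma two_mul_max_totalDegree_le (hsq : ¬ ∃ s : k, s ^ 2 = -(lam * nu))
    (p q : MvPolynomial σ k) :
    2 * max p.totalDegree q.totalDegree ≤ (C lam * p ^ 2 + C nu * q ^ 2).totalDegree := by
  obtain ⟨_, _⟩ := exists_wellFoundedGT σ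
  rcases le_total (degLex.toSyn (degLex.degree (q ^ 2))) (degLex.toSyn (degLex.degree (p ^ 2)))
    with hqp | hpq
  · exact two_mul_max_totalDegree_le_of_degLex_le hsq hqp
  · rw [max_comm, add_comm]
    exact two_mul_max_totalDegree_le_of_degLex_le (by rwa [mul_comm]) hpq

lemma coeff_eqs_of_affine_conic_eq {i j : σ} (hij : i ≠ j) (h2 : (2 : k) ≠ 0)
    {α β e γ δ f c : k}
    (h : C lam * (C α * X i + C β * X j + C e) ^ 2 + C nu * (C γ * X i + C δ * X j + C f) ^ 2 - 1
      = (C c * (C lam * X i ^ 2 + C nu * X j ^ 2 - 1) : MvPolynomial σ k)) :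
    lam * α ^ 2 + nu * γ ^ 2 = c * lam ∧ lam * α * β + nu * γ * δ = 0 ∧
      lam * β ^ 2 + nu * δ ^ 2 = c * nu ∧ lam * α * e + nu * γ * f = 0 ∧
      lam * β * e + nu * δ * f = 0 ∧ lam * e ^ 2 + nu * f ^ 2 = 1 - c := by
  obtain ⟨h₁, h₂, h₃, h₄, h₅, h₆⟩ := coeffs_eq_zero_of_quadratic_eq_zero hij
    (a := lam * α ^ 2 + nu * γ ^ 2 - c * lam) (b := 2 * (lam * α * β + nu * γ * δ))
    (c := lam * β ^ 2 + nu * δ ^ 2 - c * nu) (d := 2 * (lam * α * e + nu * γ * f))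
    (e := 2 * (lam * β * e + nu * δ * f)) (f := lam * e ^ 2 + nu * f ^ 2 - (1 - c))
    (by simp only [map_add, map_sub, map_mul, map_pow, map_one, map_ofNat]; linear_combination h)
  refine ⟨by linear_combination h₁, ?_, by linear_combination h₃, ?_, ?_, by linear_combination h₆⟩
  · simpa [h2] using h₂
  · simpa [h2] using h₄
  · simpa [h2] using h₅

lemma exists_affine_of_conic_eq (hsq : ¬ ∃ s : k, s ^ 2 = -(lam * nu))
    {P Q : MvPolynomial (Fin 2) k} {c : k}
    (h : C lam * P ^ 2 + C nu * Q ^ 2 - 1 = C c * (C lam * X 0 ^ 2 + C nu * X 1 ^ 2 - 1)) :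
    ∃ α β e γ δ f : k, P = C α * X 0 + C β * X 1 + C e ∧ Q = C γ * X 0 + C δ * X 1 + C f := by
  have hdeg : 2 * max P.totalDegree Q.totalDegree ≤ 2 := by
    refine (two_mul_max_totalDegree_le hsq P Q).trans ?_
    rw [show C lam * P ^ 2 + C nu * Q ^ 2 = C (c * lam) * X 0 ^ 2 + C (c * nu) * X 1 ^ 2 + C (1 - c)
      by simp only [map_mul, map_sub, map_one]; linear_combination h]
    exact totalDegree_C_mul_X_sq_add_C_mul_X_sq_add_C_le _ _ _ _ _
  have affine {p : MvPolynomial (Fin 2) k} (hp : p.totalDegree ≤ 1) :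
      ∃ a b e : k, p = C a * X 0 + C b * X 1 + C e := by
    have hp := eq_sum_C_mul_X_add_C_of_totalDegree_le_one hp
    rw [Fin.sum_univ_two] at hp
    exact ⟨_, _, _, hp⟩
  obtain ⟨α, β, e, hP⟩ := affine (p := P) (by omega)
  obtain ⟨γ, δ, f, hQ⟩ := affine (p := Q) (by omega)
  exact ⟨α, β, e, γ, δ, f, hP, hQ⟩

lemma exists_linear_isometry_of_conic_eq (h2 : (2 : k) ≠ 0)
    (hsq : ¬ ∃ s : k, s ^ 2 = -(lam * nu)) {P Q : MvPolynomial (Fin 2) k} {c : k} (hc : c ≠ 0)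
    (h : C lam * P ^ 2 + C nu * Q ^ 2 - 1 = C c * (C lam * X 0 ^ 2 + C nu * X 1 ^ 2 - 1)) :
    ∃ α β γ δ : k, α * δ - β * γ ≠ 0 ∧ P = C α * X 0 + C β * X 1 ∧ Q = C γ * X 0 + C δ * X 1 ∧
      C lam * (C α * X 0 + C β * X 1) ^ 2 + C nu * (C γ * X 0 + C δ * X 1) ^ 2 =
        (C lam * X 0 ^ 2 + C nu * X 1 ^ 2 : MvPolynomial (Fin 2) k) := by
  have hlam : lam ≠ 0 := by rintro rfl; exact hsq ⟨0, by simp⟩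
  have hnu : nu ≠ 0 := by rintro rfl; exact hsq ⟨0, by simp⟩
  obtain ⟨α, β, e, γ, δ, f, rfl, rfl⟩ := exists_affine_of_conic_eq hsq h
  obtain ⟨h₁, h₂, h₃, h₄, h₅, h₆⟩ := coeff_eqs_of_affine_conic_eq Fin.zero_ne_one h2 h
  have hdet := det_ne_zero_of_gram_eq hlam hnu hc h₁ h₂ h₃
  obtain ⟨rfl, rfl⟩ := eq_zero_of_transpose_mul_eq_zero hlam hnu hdet h₄ h₅
  obtain rfl : c = 1 := by linear_combination h₆
  refine ⟨α, β, γ, δ, hdet, by simp, by simp, mul_sq_add_mul_sq_comp_linear_eq ?_ h₂ ?_⟩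
  · linear_combination h₁
  · linear_combination h₃

end Anisotropic

end MvPolynomial

theorem aut_of_anisotropic_conic_general {k : Type*} [Field k]
    (hchar : ringChar k ≠ 2) (lam nu : kˣ)
    (hsq : ¬ ∃ s : k, s ^ 2 = -((lam : k) * (nu : k)))
    (φ : MvPolynomial (Fin 2) k ≃ₐ[k] MvPolynomial (Fin 2) k) :
    (∃ c : kˣ, φ (C (lam : k) * X 0 ^ 2 + C (nu : k) * X 1 ^ 2 - 1)
        = C (c : k) * (C (lam : k) * X 0 ^ 2 + C (nu : k) * X 1 ^ 2 - 1)) ↔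
      ∃ α β γ δ : k, α * δ - β * γ ≠ 0 ∧
        φ (X 0) = C α * X 0 + C β * X 1 ∧
        φ (X 1) = C γ * X 0 + C δ * X 1 ∧
        C (lam : k) * (C α * X 0 + C β * X 1) ^ 2
            + C (nu : k) * (C γ * X 0 + C δ * X 1) ^ 2
          = C (lam : k) * X 0 ^ 2 + C (nu : k) * X 1 ^ 2 := by
  have hC (a : k) : φ (C a) = C a := φ.commutes a
  rw [show φ (C (lam : k) * X 0 ^ 2 + C (nu : k) * X 1 ^ 2 - 1)
      = C (lam : k) * φ (X 0) ^ 2 + C (nu : k) * φ (X 1) ^ 2 - 1 by simp [hC]]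
  -- Nothing fixes the type of `X 0`, `X 1` in the last equation of the statement, so it is
  -- elaborated in `MvPolynomial ℕ k`; hence the two `rename`s.
  constructor
  · rintro ⟨c, hc⟩
    obtain ⟨α, β, γ, δ, hdet, hP, hQ, hform⟩ :=
      exists_linear_isometry_of_conic_eq (Ring.two_ne_zero hchar) hsq c.ne_zero hc
    exact ⟨α, β, γ, δ, hdet, hP, hQ, by simpa using congrArg (rename (R := k) Fin.val) hform⟩
  · rintro ⟨α, β, γ, δ, -, hP, hQ, hform⟩
    refine ⟨1, ?_⟩
    rw [hP, hQ, Units.val_one, map_one, one_mul, sub_left_inj]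
    simpa using congrArg (rename (R := k) (Fin.ofNat 2)) hform

/-- over a perfect field of characteristic `≠ 2`, the automorphisms of `𝔸²`
preserving the conic `λx² + νy² = 1` (with `-λν` not a square) are exactly the linear
automorphisms preserving the quadratic form `λx² + νy²`. -/
theorem aut_of_anisotropic_conic {k : Type*} [Field k] [PerfectField k]
    (hchar : ringChar k ≠ 2) (lam nu : kˣ)
    (hsq : ¬ ∃ s : k, s ^ 2 = -((lam : k) * (nu : k)))
    (φ : MvPolynomial (Fin 2) k ≃ₐ[k] MvPolynomial (Fin 2) k) :
    (∃ c : kˣ, φ (C (lam : k) * X 0 ^ 2 + C (nu : k) * X 1 ^ 2 - 1)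
        = C (c : k) * (C (lam : k) * X 0 ^ 2 + C (nu : k) * X 1 ^ 2 - 1)) ↔
      ∃ α β γ δ : k, α * δ - β * γ ≠ 0 ∧
        φ (X 0) = C α * X 0 + C β * X 1 ∧
        φ (X 1) = C γ * X 0 + C δ * X 1 ∧
        C (lam : k) * (C α * X 0 + C β * X 1) ^ 2
            + C (nu : k) * (C γ * X 0 + C δ * X 1) ^ 2
          = C (lam : k) * X 0 ^ 2 + C (nu : k) * X 1 ^ 2 :=
  aut_of_anisotropic_conic_general hchar lam nu hsq φ
end
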